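/- arXiv:1605.00977 — 9 statements merged into one kernel-verified Lean document; each statement's English description precedes it below -/
import Mathlib

section
/- There do not exist (p,q) ∈ [0,1]² and β₀ ∈ [0,1) such that (p,q) is a β-Nash equilibrium of the Example-1 game for every β ∈ [β₀,1); i.e., the game admits no stationary Blackwell–Nash equilibrium. -/
open Matrix Set

noncomputable section

/-- Transition matrix of the Example-1 game (controlled by player 2 alone). -/
def ex1P (q : ℝ) : Matrix (Fin 2) (Fin 2) ℝ := !![q, 1 - q; 1, 0]

/-- Expected one-step reward vector of player 1 in the Example-1 game. -/
def ex1r1 (p q : ℝ) : Fin 2 → ℝ :=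
  ![4*p*q + 6*p*(1-q) + 5*(1-p)*q + 4*(1-p)*(1-q), 6]

/-- Expected one-step reward vector of player 2 in the Example-1 game. -/
def ex1r2 (p q : ℝ) : Fin 2 → ℝ :=
  ![9*p*q + 3*p*(1-q) + 4*(1-p)*q + 5*(1-p)*(1-q), 7]

/-- Discounted value vector of player 1. -/
def ex1v1 (β p q : ℝ) : Fin 2 → ℝ :=
  ((1 : Matrix (Fin 2) (Fin 2) ℝ) - β • ex1P q)⁻¹.mulVec (ex1r1 p q)

/-- Discounted value vector of player 2. -/
def ex1v2 (β p q : ℝ) : Fin 2 → ℝ :=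
  ((1 : Matrix (Fin 2) (Fin 2) ℝ) - β • ex1P q)⁻¹.mulVec (ex1r2 p q)

/-- `(p,q)` is a β-Nash equilibrium of the Example-1 game. -/
def ex1IsNash (β p q : ℝ) : Prop :=
  p ∈ Icc (0:ℝ) 1 ∧ q ∈ Icc (0:ℝ) 1 ∧
  (∀ p' ∈ Icc (0:ℝ) 1, ∀ s, ex1v1 β p' q s ≤ ex1v1 β p q s) ∧
  (∀ q' ∈ Icc (0:ℝ) 1, ∀ s, ex1v2 β p q' s ≤ ex1v2 β p q s)

/- Auxiliary lemmas -/

lemma ex1M_eq (β q : ℝ) : (1 : Matrix (Fin 2) (Fin 2) ℝ) - β • ex1P q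
    = !![1-β*q, -(β*(1-q)); -β, 1] := by
  ext i j
  fin_cases i <;> fin_cases j <;> simp [ex1P, Matrix.one_apply]

lemma ex1_mulVec_inv (β q : ℝ) (hd : (1-β)*(1+β-β*q) ≠ 0) (r w : Fin 2 → ℝ)
    (hw : ((1 : Matrix (Fin 2) (Fin 2) ℝ) - β • ex1P q).mulVec w = r) :
    ((1 : Matrix (Fin 2) (Fin 2) ℝ) - β • ex1P q)⁻¹.mulVec r = w := by
  have hdet : IsUnit ((1 : Matrix (Fin 2) (Fin 2) ℝ) - β • ex1P q).det := by
    rw [ex1M_eq, Matrix.det_fin_two_of, isUnit_iff_ne_zero]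
    rwa [show (1-β)*(1+β-β*q) = (1-β*q) * 1 - -(β*(1-q)) * -β from by ring] at hd
  rw [← hw, Matrix.mulVec_mulVec, Matrix.nonsing_inv_mul _ hdet, Matrix.one_mulVec]

lemma ex1v1_eq (β p q : ℝ) (hd : (1-β)*(1+β-β*q) ≠ 0) :
    ex1v1 β p q = ![(4*p*q + 6*p*(1-q) + 5*(1-p)*q + 4*(1-p)*(1-q) + β*(1-q)*6)
        / ((1-β)*(1+β-β*q)),
      (β*(4*p*q + 6*p*(1-q) + 5*(1-p)*q + 4*(1-p)*(1-q)) + (1-β*q)*6)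
        / ((1-β)*(1+β-β*q))] := by
  apply ex1_mulVec_inv β q hd
  rw [ex1M_eq]
  ext i
  fin_cases i <;>
    · simp [Matrix.mulVec, dotProduct, Fin.sum_univ_two, ex1r1]
      obtain ⟨h1, h2⟩ := mul_ne_zero_iff.mp hd
      field_simp
      ring

lemma ex1v2_eq (β p q : ℝ) (hd : (1-β)*(1+β-β*q) ≠ 0) :
    ex1v2 β p q = ![(9*p*q + 3*p*(1-q) + 4*(1-p)*q + 5*(1-p)*(1-q) + β*(1-q)*7)
        / ((1-β)*(1+β-β*q)),
      (β*(9*p*q + 3*p*(1-q) + 4*(1-p)*q + 5*(1-p)*(1-q)) + (1-β*q)*7)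
        / ((1-β)*(1+β-β*q))] := by
  apply ex1_mulVec_inv β q hd
  rw [ex1M_eq]
  ext i
  fin_cases i <;>
    · simp [Matrix.mulVec, dotProduct, Fin.sum_univ_two, ex1r2]
      obtain ⟨h1, h2⟩ := mul_ne_zero_iff.mp hd
      field_simp
      ring

lemma ex1_pos_aux {c x : ℝ} (hc : 0 < c) (h : 0 ≤ c * x) : 0 ≤ x :=
  le_of_not_gt fun hx => absurd h (not_le.mpr (mul_neg_of_pos_of_neg hc hx))

lemma ex1_neg_aux {c x : ℝ} (hc : 0 < c) (h : c * x ≤ 0) : x ≤ 0 :=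
  le_of_not_gt fun hx => absurd h (not_le.mpr (mul_pos hc hx))

/-- The Example-1 single-controller game has no stationary Blackwell–Nash equilibrium. -/
theorem ex1_no_stationary_BNE :
    ¬ ∃ (p q β₀ : ℝ), p ∈ Icc (0:ℝ) 1 ∧ q ∈ Icc (0:ℝ) 1 ∧ β₀ ∈ Ico (0:ℝ) 1 ∧
      ∀ β ∈ Ico β₀ 1, ex1IsNash β p q := by
  rintro ⟨p, q, β₀, ⟨hp0, hp1⟩, ⟨hq0, hq1⟩, ⟨hb00, hb01⟩, hN⟩
  have key : ∀ β, β₀ ≤ β → β < 1 →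
      0 ≤ q * (p*(7+5*β)-(1+3*β)) ∧ (1-q) * (p*(7+5*β)-(1+3*β)) ≤ 0 ∧
      0 ≤ p*(2-3*q) ∧ (1-p)*(2-3*q) ≤ 0 := by
    intro β hbl hbu
    have hb0 : 0 ≤ β := le_trans hb00 hbl
    have h1β : 0 < 1 - β := by linarith
    obtain ⟨-, -, h3, h4⟩ := hN β ⟨hbl, hbu⟩
    have hdq : 0 < (1-β)*(1+β-β*q) := by
      nlinarith [mul_nonneg hb0 (sub_nonneg.mpr hq1)]
    have hd0 : 0 < (1-β)*(1+β-β*(0:ℝ)) := by nlinarith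
    have hd1 : 0 < (1-β)*(1+β-β*(1:ℝ)) := by nlinarith
    have e  := congrFun (ex1v2_eq β p q hdq.ne') 0
    have e0 := congrFun (ex1v2_eq β p 0 hd0.ne') 0
    have e1 := congrFun (ex1v2_eq β p 1 hd1.ne') 0
    have f  := congrFun (ex1v1_eq β p q hdq.ne') 0
    have f0 := congrFun (ex1v1_eq β 0 q hdq.ne') 0
    have f1 := congrFun (ex1v1_eq β 1 q hdq.ne') 0
    simp only [Matrix.cons_val_zero] at e e0 e1 f f0 f1
    have H0 := h4 0 ⟨le_refl 0, zero_le_one⟩ 0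
    have H1 := h4 1 ⟨zero_le_one, le_refl 1⟩ 0
    have G0 := h3 0 ⟨le_refl 0, zero_le_one⟩ 0
    have G1 := h3 1 ⟨zero_le_one, le_refl 1⟩ 0
    rw [e0, e] at H0
    rw [e1, e] at H1
    rw [f0, f] at G0
    rw [f1, f] at G1
    have H0' := (div_le_div_iff₀ hd0 hdq).mp H0
    have H1' := (div_le_div_iff₀ hd1 hdq).mp H1
    have G0' := (div_le_div_iff₀ hdq hdq).mp G0
    have G1' := (div_le_div_iff₀ hdq hdq).mp G1
    refine ⟨?_, ?_, ?_, ?_⟩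
    · refine ex1_pos_aux h1β ?_
      linarith [H0']
    · refine ex1_neg_aux h1β ?_
      linarith [H1']
    · refine ex1_pos_aux hdq ?_
      linarith [G0']
    · refine ex1_neg_aux hdq ?_
      linarith [G1']
  obtain ⟨a1, b1, c1, d1⟩ := key β₀ le_rfl hb01
  obtain ⟨a2, b2, -, -⟩ := key ((β₀+1)/2) (by linarith) (by linarith)
  rcases lt_trichotomy (2-3*q) 0 with h | h | h
  · -- best response of player 1 forces p = 0
    have hpq : p * (2-3*q) ≤ 0 := mul_nonpos_of_nonneg_of_nonpos hp0 h.le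
    have hp' : p = 0 := by
      rcases mul_eq_zero.mp (le_antisymm hpq c1) with h' | h'
      · exact h'
      · linarith
    subst hp'
    nlinarith [a1, mul_nonneg hq0 hb00, h]
  · have hq' : q = 2/3 := by linarith
    subst hq'
    have hk1 : p*(7+5*β₀)-(1+3*β₀) = 0 := by linarith [a1, b1]
    have hk2 : p*(7+5*((β₀+1)/2))-(1+3*((β₀+1)/2)) = 0 := by linarith [a2, b2]
    have hp' : p = 1/3 := by linarith [hk1, hk2]
    subst hp'
    linarith [hk1]
  · -- best response of player 1 forces p = 1
    have hpq : 0 ≤ (1-p) * (2-3*q) := mul_nonneg (by linarith) h.le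
    have hp' : p = 1 := by
      rcases mul_eq_zero.mp (le_antisymm d1 hpq) with h' | h'
      · linarith
      · linarith
    subst hp'
    nlinarith [b1, mul_nonneg (sub_nonneg.mpr hq1) hb00, h]

end
end

section
/- For each fixed β ∈ [0,1), a pair (p,q) ∈ [0,1]² is a β-Nash equilibrium of the Example-1 game if and only if p = (3β+1)/(7+5β) and q = 2/3; in particular the β-Nash equilibrium is unique for each β. -/
open Matrix Set

noncomputable section

lemma ex1_inv (β q : ℝ) (hβ0 : 0 ≤ β) (hβ1 : β < 1) (hq1 : q ≤ 1) :
    ((1 : Matrix (Fin 2) (Fin 2) ℝ) - β • ex1P q)⁻¹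
      = ((1-β)*(1+β-β*q))⁻¹ • !![1, β*(1-q); β, 1-β*q] := by
  have h1 : (1:ℝ) - β ≠ 0 := by intro h; linarith
  have h2 : (1:ℝ) + (β - β*q) ≠ 0 := by nlinarith
  have hab : ((1-β)*(1+(β-β*q))) * ((1-β)⁻¹ * (1+(β-β*q))⁻¹) = 1 := by
    rw [← mul_inv]; exact mul_inv_cancel₀ (mul_ne_zero h1 h2)
  apply Matrix.inv_eq_right_inv
  ext i j
  fin_cases i <;> fin_cases j <;>
    simp [ex1P, Matrix.mul_apply, Fin.sum_univ_two, Matrix.one_apply]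
  all_goals first | ring1 | linear_combination hab

lemma ex1v1_zero (β p q : ℝ) (hβ0 : 0 ≤ β) (hβ1 : β < 1) (hq1 : q ≤ 1) :
    ex1v1 β p q 0 = (4*p*q + 6*p*(1-q) + 5*(1-p)*q + 4*(1-p)*(1-q) + 6*(β*(1-q)))
      / ((1-β)*(1+β-β*q)) := by
  have hsplit : ((1-β)*(1+β-β*q))⁻¹ = (1-β)⁻¹ * (1+(β-β*q))⁻¹ := by
    rw [← mul_inv]; congr 1; ring
  rw [ex1v1, ex1_inv β q hβ0 hβ1 hq1, div_eq_mul_inv, hsplit]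
  simp [Matrix.mulVec, dotProduct, Fin.sum_univ_two, ex1r1]
  ring

lemma ex1v1_one (β p q : ℝ) (hβ0 : 0 ≤ β) (hβ1 : β < 1) (hq1 : q ≤ 1) :
    ex1v1 β p q 1 = (β*(4*p*q + 6*p*(1-q) + 5*(1-p)*q + 4*(1-p)*(1-q)) + 6*(1-β*q))
      / ((1-β)*(1+β-β*q)) := by
  have hsplit : ((1-β)*(1+β-β*q))⁻¹ = (1-β)⁻¹ * (1+(β-β*q))⁻¹ := by
    rw [← mul_inv]; congr 1; ring
  rw [ex1v1, ex1_inv β q hβ0 hβ1 hq1, div_eq_mul_inv, hsplit]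
  simp [Matrix.mulVec, dotProduct, Fin.sum_univ_two, ex1r1]
  ring

lemma ex1v2_zero (β p q : ℝ) (hβ0 : 0 ≤ β) (hβ1 : β < 1) (hq1 : q ≤ 1) :
    ex1v2 β p q 0 = (9*p*q + 3*p*(1-q) + 4*(1-p)*q + 5*(1-p)*(1-q) + 7*(β*(1-q)))
      / ((1-β)*(1+β-β*q)) := by
  have hsplit : ((1-β)*(1+β-β*q))⁻¹ = (1-β)⁻¹ * (1+(β-β*q))⁻¹ := by
    rw [← mul_inv]; congr 1; ring
  rw [ex1v2, ex1_inv β q hβ0 hβ1 hq1, div_eq_mul_inv, hsplit]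
  simp [Matrix.mulVec, dotProduct, Fin.sum_univ_two, ex1r2]
  ring

lemma ex1v2_one (β p q : ℝ) (hβ0 : 0 ≤ β) (hβ1 : β < 1) (hq1 : q ≤ 1) :
    ex1v2 β p q 1 = (β*(9*p*q + 3*p*(1-q) + 4*(1-p)*q + 5*(1-p)*(1-q)) + 7*(1-β*q))
      / ((1-β)*(1+β-β*q)) := by
  have hsplit : ((1-β)*(1+β-β*q))⁻¹ = (1-β)⁻¹ * (1+(β-β*q))⁻¹ := by
    rw [← mul_inv]; congr 1; ring
  rw [ex1v2, ex1_inv β q hβ0 hβ1 hq1, div_eq_mul_inv, hsplit]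
  simp [Matrix.mulVec, dotProduct, Fin.sum_univ_two, ex1r2]
  ring

set_option maxHeartbeats 1000000 in
/-- For each fixed discount factor β, the Example-1 game has the unique Nash
equilibrium `p = (3β+1)/(7+5β)`, `q = 2/3`. -/
theorem ex1_unique_nash :
    ∀ β ∈ Ico (0:ℝ) 1, ∀ p ∈ Icc (0:ℝ) 1, ∀ q ∈ Icc (0:ℝ) 1,
      (ex1IsNash β p q ↔ (p = (3*β+1)/(7+5*β) ∧ q = 2/3)) := by
  intro β hβ p hp q hq
  obtain ⟨hβ0, hβ1⟩ := hβ
  have hb : (0:ℝ) < 1 - β := by linarith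
  have hDpos : ∀ x : ℝ, x ≤ 1 → 0 < (1-β)*(1+β-β*x) := by
    intro x hx
    have hbx : β * x ≤ β * 1 := mul_le_mul_of_nonneg_left hx hβ0
    have : 0 < 1 + β - β * x := by linarith
    exact mul_pos hb this
  have h75 : (0:ℝ) < 7+5*β := by linarith
  constructor
  · rintro ⟨hpI, hqI, h1, h2⟩
    set c := p*(7+5*β) - (1+3*β) with hc
    -- player 2 deviations at state 0
    have e0 := h2 0 (by norm_num) 0
    have e1 := h2 1 (by norm_num) 0
    rw [ex1v2_zero β p 0 hβ0 hβ1 (by norm_num), ex1v2_zero β p q hβ0 hβ1 hq.2,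
        div_le_div_iff₀ (hDpos 0 (by norm_num)) (hDpos q hq.2)] at e0
    rw [ex1v2_zero β p 1 hβ0 hβ1 (by norm_num), ex1v2_zero β p q hβ0 hβ1 hq.2,
        div_le_div_iff₀ (hDpos 1 (by norm_num)) (hDpos q hq.2)] at e1
    have k0 : 0 ≤ q * c := by
      show 0 ≤ q * (p*(7+5*β) - (1+3*β)); nlinarith [e0, hb]
    have k1 : 0 ≤ (q - 1) * c := by
      show 0 ≤ (q - 1) * (p*(7+5*β) - (1+3*β)); nlinarith [e1, hb]
    -- player 1 deviations at state 0
    have f0 := h1 0 (by norm_num) 0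
    have f1 := h1 1 (by norm_num) 0
    rw [ex1v1_zero β 0 q hβ0 hβ1 hq.2, ex1v1_zero β p q hβ0 hβ1 hq.2,
        div_le_div_iff₀ (hDpos q hq.2) (hDpos q hq.2)] at f0
    rw [ex1v1_zero β 1 q hβ0 hβ1 hq.2, ex1v1_zero β p q hβ0 hβ1 hq.2,
        div_le_div_iff₀ (hDpos q hq.2) (hDpos q hq.2)] at f1
    have g0 : 0 ≤ p * (2 - 3*q) := by nlinarith [f0, hDpos q hq.2]
    have g1 : (1 - p) * (2 - 3*q) ≤ 0 := by nlinarith [f1, hDpos q hq.2]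
    have hc0 : c = 0 := by
      rcases lt_trichotomy c 0 with hlt | heq | hgt
      · have hq0 : q = 0 := le_antisymm (by nlinarith) hq.1
        have hp1 : p = 1 := le_antisymm hp.2 (by nlinarith)
        rw [hp1] at hc; nlinarith
      · exact heq
      · have hq1' : q = 1 := le_antisymm hq.2 (by nlinarith)
        have hp0 : p = 0 := le_antisymm (by nlinarith) hp.1
        rw [hp0] at hc; nlinarith
    have hpval : p = (3*β+1)/(7+5*β) := by
      rw [eq_div_iff (ne_of_gt h75)]; linarith [hc0, hc]
    refine ⟨hpval, ?_⟩
    have hp0 : 0 < p := by nlinarith [hc, hc0, h75, hβ0]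
    have hp1 : p < 1 := by nlinarith [hc, hc0, h75, hβ0]
    have l1 : 0 ≤ 2 - 3*q := by nlinarith
    have l2 : 2 - 3*q ≤ 0 := by nlinarith
    linarith
  · rintro ⟨hp', hq'⟩
    subst hp' hq'
    refine ⟨hp, hq, ?_, ?_⟩
    · intro p' hp'' s
      fin_cases s
      · show ex1v1 β p' (2/3) 0 ≤ ex1v1 β _ (2/3) 0
        rw [ex1v1_zero β p' (2/3) hβ0 hβ1 (by norm_num),
            ex1v1_zero β _ (2/3) hβ0 hβ1 (by norm_num)]
        apply le_of_eq; congr 1; ring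
      · show ex1v1 β p' (2/3) 1 ≤ ex1v1 β _ (2/3) 1
        rw [ex1v1_one β p' (2/3) hβ0 hβ1 (by norm_num),
            ex1v1_one β _ (2/3) hβ0 hβ1 (by norm_num)]
        apply le_of_eq; congr 1; ring
    · intro q' hq'' s
      fin_cases s
      · show ex1v2 β _ q' 0 ≤ ex1v2 β _ (2/3) 0
        rw [ex1v2_zero β _ q' hβ0 hβ1 hq''.2,
            ex1v2_zero β _ (2/3) hβ0 hβ1 (by norm_num)]
        apply le_of_eq
        rw [div_eq_div_iff (ne_of_gt (hDpos q' hq''.2)) (ne_of_gt (hDpos (2/3) (by norm_num)))]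
        field_simp
        ring
      · show ex1v2 β _ q' 1 ≤ ex1v2 β _ (2/3) 1
        rw [ex1v2_one β _ q' hβ0 hβ1 hq''.2,
            ex1v2_one β _ (2/3) hβ0 hβ1 (by norm_num)]
        apply le_of_eq
        rw [div_eq_div_iff (ne_of_gt (hDpos q' hq''.2)) (ne_of_gt (hDpos (2/3) (by norm_num)))]
        field_simp
        ring


end
end

section
/- In the Example-1 game with the average (Cesàro) reward criterion, for every (p,q) ∈ [0,1]² the limit v_ea^i(p,q) = lim_{N→∞} (1/N) Σ_{t=0}^{N−1} P(q)^t r^i(p,q) exists for i=1,2, and the pair (p,q) = (1/3, 2/3) is an average-reward Nash equilibrium: v_ea¹(1/3, 2/3) ≥ v_ea¹(p′, 2/3) componentwise for all p′ ∈ [0,1], and v_ea²(1/3, 2/3) ≥ v_ea²(1/3, q′) componentwise for all q′ ∈ [0,1]. -/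
open Matrix Set

noncomputable section

/-- Cesàro-limit projection of `ex1P q`. -/
def ex1Q (q : ℝ) : Matrix (Fin 2) (Fin 2) ℝ := (2-q)⁻¹ • !![1, 1-q; 1, 1-q]

lemma ex1QP (q : ℝ) (hq : 2 - q ≠ 0) : ex1Q q * ex1P q = ex1Q q := by
  ext i j
  fin_cases i <;> fin_cases j <;>
    simp [ex1Q, ex1P, Matrix.mul_apply, Fin.sum_univ_two] <;> field_simp <;> ring

lemma ex1IQP (q : ℝ) (hq : 2 - q ≠ 0) :
    (1 - ex1Q q) * ex1P q = (q-1) • (1 - ex1Q q) := by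
  ext i j
  fin_cases i <;> fin_cases j <;>
    simp [ex1Q, ex1P, Matrix.mul_apply, Fin.sum_univ_two, Matrix.one_apply] <;>
    field_simp <;> ring

lemma ex1pow (q : ℝ) (hq : 2 - q ≠ 0) (t : ℕ) :
    ex1P q ^ t = ex1Q q + (q-1)^t • (1 - ex1Q q) := by
  induction t with
  | zero => simp
  | succ t ih =>
    rw [pow_succ, ih, add_mul, Matrix.smul_mul, ex1QP q hq, ex1IQP q hq,
      smul_smul, pow_succ]

lemma ex1geom_bound (q : ℝ) (hq : q ∈ Icc (0:ℝ) 1) (N : ℕ) :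
    |∑ t ∈ Finset.range N, (q-1)^t| ≤ 2 := by
  obtain ⟨h0, h1⟩ := hq
  have hne : q - 1 ≠ 1 := by linarith
  rw [geom_sum_eq hne, abs_div]
  have habs : |q - 1| ≤ 1 := by rw [abs_le]; constructor <;> linarith
  have hpow : |(q-1)^N| ≤ 1 := by
    rw [abs_pow]; exact pow_le_one₀ (abs_nonneg _) habs
  have hnum : |(q-1)^N - 1| ≤ 2 := by
    calc |(q-1)^N - 1| ≤ |(q-1)^N| + |(1:ℝ)| := abs_sub _ _
    _ ≤ 2 := by rw [abs_one]; linarith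
  have hden : (1:ℝ) ≤ |q - 1 - 1| := by
    rw [abs_sub_comm, abs_of_nonneg (by linarith : (0:ℝ) ≤ 1 - (q-1))]; linarith
  calc |(q-1)^N - 1| / |q - 1 - 1| ≤ |(q-1)^N - 1| / 1 :=
        div_le_div_of_nonneg_left (abs_nonneg _) one_pos hden |>.trans_eq rfl
  _ ≤ 2 := by rw [div_one]; exact hnum

/-- The Cesàro averages of `P(q)^t r` converge to `Q(q) r`. -/
lemma ex1cesaro (q : ℝ) (hq : q ∈ Icc (0:ℝ) 1) (r : Fin 2 → ℝ) :
    Filter.Tendsto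
      (fun N : ℕ => (N : ℝ)⁻¹ • ∑ t ∈ Finset.range N, (ex1P q ^ t).mulVec r)
      Filter.atTop (nhds ((ex1Q q).mulVec r)) := by
  have h2 : (2:ℝ) - q ≠ 0 := by have := hq.2; intro h; linarith
  set c := (ex1Q q).mulVec r with hc
  set w := ((1 : Matrix (Fin 2) (Fin 2) ℝ) - ex1Q q).mulVec r with hw
  set S : ℕ → ℝ := fun N => ∑ t ∈ Finset.range N, (q-1)^t with hS
  have hsum : ∀ N : ℕ, ∑ t ∈ Finset.range N, (ex1P q ^ t).mulVec r
      = (N:ℝ) • c + S N • w := by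
    intro N
    have : ∀ t ∈ Finset.range N,
        (ex1P q ^ t).mulVec r = c + (q-1)^t • w := by
      intro t _
      rw [ex1pow q h2 t, Matrix.add_mulVec, Matrix.smul_mulVec]
    rw [Finset.sum_congr rfl this, Finset.sum_add_distrib, Finset.sum_const,
      Finset.card_range, ← Finset.sum_smul, ← Nat.cast_smul_eq_nsmul ℝ]
  have ha : Filter.Tendsto (fun N : ℕ => (N:ℝ)⁻¹ * S N) Filter.atTop (nhds 0) := by
    refine squeeze_zero_norm (a := fun N : ℕ => 2 / (N:ℝ)) ?_
      (tendsto_const_div_atTop_nhds_zero_nat 2)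
    intro N
    simp only [Real.norm_eq_abs, abs_mul, abs_inv, Nat.abs_cast, div_eq_inv_mul]
    rcases Nat.eq_zero_or_pos N with h | h
    · simp [h]
    · exact mul_le_mul_of_nonneg_left (ex1geom_bound q hq N) (by positivity)
  have hlim : Filter.Tendsto (fun N : ℕ => c + ((N:ℝ)⁻¹ * S N) • w)
      Filter.atTop (nhds c) := by
    have := (ha.smul_const w)
    have h := Filter.Tendsto.add (tendsto_const_nhds (x := c)) this
    simpa using h
  refine hlim.congr' ?_
  filter_upwards [Filter.eventually_ge_atTop 1] with N hN
  have hN0 : (N:ℝ) ≠ 0 := by positivity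
  rw [hsum N, smul_add, smul_smul, smul_smul, inv_mul_cancel₀ hN0, one_smul]

/-- In the Example-1 game the Cesàro (average) values exist for every stationary
pair, and `(1/3, 2/3)` is an average-reward Nash equilibrium. -/
theorem ex1_average_nash :
    ∃ vea1 vea2 : ℝ → ℝ → Fin 2 → ℝ,
      (∀ p ∈ Icc (0:ℝ) 1, ∀ q ∈ Icc (0:ℝ) 1,
        Filter.Tendsto
          (fun N : ℕ => (N : ℝ)⁻¹ • ∑ t ∈ Finset.range N, (ex1P q ^ t).mulVec (ex1r1 p q))
          Filter.atTop (nhds (vea1 p q)) ∧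
        Filter.Tendsto
          (fun N : ℕ => (N : ℝ)⁻¹ • ∑ t ∈ Finset.range N, (ex1P q ^ t).mulVec (ex1r2 p q))
          Filter.atTop (nhds (vea2 p q))) ∧
      (∀ p' ∈ Icc (0:ℝ) 1, ∀ s, vea1 p' (2/3) s ≤ vea1 (1/3) (2/3) s) ∧
      (∀ q' ∈ Icc (0:ℝ) 1, ∀ s, vea2 (1/3) q' s ≤ vea2 (1/3) (2/3) s) := by
  refine ⟨fun p q => (ex1Q q).mulVec (ex1r1 p q),
          fun p q => (ex1Q q).mulVec (ex1r2 p q), ?_, ?_, ?_⟩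
  · intro p _ q hq
    exact ⟨ex1cesaro q hq _, ex1cesaro q hq _⟩
  · intro p' _ s
    have h : ∀ p : ℝ, ∀ s : Fin 2, (ex1Q (2/3)).mulVec (ex1r1 p (2/3)) s = 5 := by
      intro p s
      fin_cases s <;>
        simp [ex1Q, ex1r1, Matrix.mulVec, dotProduct, Fin.sum_univ_two] <;>
        ring_nf <;> norm_num
    show (ex1Q (2/3)).mulVec (ex1r1 p' (2/3)) s ≤
      (ex1Q (2/3)).mulVec (ex1r1 (1/3) (2/3)) s
    rw [h, h]
  · intro q' hq' s
    have h2 : ∀ q : ℝ, q ∈ Icc (0:ℝ) 1 → ∀ s : Fin 2,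
        (ex1Q q).mulVec (ex1r2 (1/3) q) s = 17/3 := by
      intro q hq s
      have hne : (2:ℝ) - q ≠ 0 := by have := hq.2; intro h; linarith
      fin_cases s <;>
        simp [ex1Q, ex1r2, Matrix.mulVec, dotProduct, Fin.sum_univ_two] <;>
        field_simp <;> ring
    show (ex1Q q').mulVec (ex1r2 (1/3) q') s ≤
      (ex1Q (2/3)).mulVec (ex1r2 (1/3) (2/3)) s
    rw [h2 q' hq', h2 (2/3) (by norm_num)]

end
end

section
/- In the Example-1 game, let p_β = (3β+1)/(7+5β) for β ∈ [0,1). Then for i = 1,2 and each state s ∈ {1,2}, lim_{β→1⁻} (1−β)·v_β^i(p_β, 2/3)(s) exists and equals v_ea^i(1/3, 2/3)(s), the average (Cesàro) value at the pair (1/3, 2/3). -/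
open Matrix Set

noncomputable section

open Filter

set_option linter.unnecessarySeqFocus false

def matA : Matrix (Fin 2) (Fin 2) ℝ := !![3/4, 1/4; 3/4, 1/4]
def matB : Matrix (Fin 2) (Fin 2) ℝ := !![1/4, -(1/4); -(3/4), 3/4]

lemma pow_formula (t : ℕ) : ex1P (2/3) ^ t = matA + ((-1/3 : ℝ)^t) • matB := by
  induction t with
  | zero =>
      ext i j
      fin_cases i <;> fin_cases j <;>
        simp [matA, matB, Matrix.one_apply] <;> norm_num
  | succ t ih =>
      rw [pow_succ, ih]
      ext i j
      fin_cases i <;> fin_cases j <;>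
        simp [matA, matB, ex1P, Matrix.mul_apply, Fin.sum_univ_two, pow_succ] <;> ring

lemma cesaro_lemma (r : Fin 2 → ℝ) (s : Fin 2) :
    Tendsto (fun N : ℕ => (N : ℝ)⁻¹ * ∑ t ∈ Finset.range N,
      (ex1P (2/3) ^ t).mulVec r s) atTop (nhds ((3 * r 0 + r 1)/4)) := by
  have h : ∀ t : ℕ, (ex1P (2/3) ^ t).mulVec r s
      = (3 * r 0 + r 1)/4 + (-1/3 : ℝ)^t * (matB.mulVec r s) := by
    intro t
    rw [pow_formula]
    fin_cases s <;>
      simp [matA, matB, Matrix.mulVec, dotProduct, Fin.sum_univ_two] <;> ring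
  have h2 : Tendsto (fun t : ℕ => (ex1P (2/3) ^ t).mulVec r s) atTop
      (nhds ((3 * r 0 + r 1)/4)) := by
    simp only [h]
    have := (tendsto_pow_atTop_nhds_zero_of_abs_lt_one
      (by rw [abs_lt]; constructor <;> norm_num : |(-1/3 : ℝ)| < 1)).mul_const
      (matB.mulVec r s)
    simpa using tendsto_const_nhds.add this
  exact h2.cesaro

lemma inv_formula {β : ℝ} (h0 : 0 < β) (h1 : β < 1) :
    ((1 : Matrix (Fin 2) (Fin 2) ℝ) - β • ex1P (2/3))⁻¹ =
      !![3/((1-β)*(3+β)), β/((1-β)*(3+β));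
         3*β/((1-β)*(3+β)), (3-2*β)/((1-β)*(3+β))] := by
  have hb1 : (1 : ℝ) - β ≠ 0 := by linarith
  have hb3 : (3 : ℝ) + β ≠ 0 := by linarith
  apply Matrix.inv_eq_right_inv
  ext i j
  fin_cases i <;> fin_cases j <;>
    simp [ex1P, Matrix.mul_apply, Fin.sum_univ_two, Matrix.one_apply] <;>
    field_simp <;> ring

lemma abel_eq (r : Fin 2 → ℝ) {β : ℝ} (h0 : 0 < β) (h1 : β < 1) (s : Fin 2) :
    (1 - β) * (((1 : Matrix (Fin 2) (Fin 2) ℝ) - β • ex1P (2/3))⁻¹.mulVec r s)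
      = if s = 0 then (3 * r 0 + β * r 1)/(3+β)
        else (3 * β * r 0 + (3 - 2*β) * r 1)/(3+β) := by
  have hb1 : (1 : ℝ) - β ≠ 0 := by linarith
  have hb3 : (3 : ℝ) + β ≠ 0 := by linarith
  rw [inv_formula h0 h1]
  fin_cases s <;>
    simp [Matrix.mulVec, dotProduct, Fin.sum_univ_two] <;>
    field_simp <;> ring

lemma hr1 (p : ℝ) : ex1r1 p (2/3) = ![14/3, 6] := by
  funext i; fin_cases i <;> simp [ex1r1] <;> ring

lemma hr2 (p : ℝ) : ex1r2 p (2/3) = ![(8*p+13)/3, 7] := by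
  funext i; fin_cases i <;> simp [ex1r2] <;> ring

lemma hmem_Ioo : Ioo (0:ℝ) 1 ∈ nhdsWithin (1:ℝ) (Iio 1) := by
  rw [← Set.Ioi_inter_Iio]
  exact Filter.inter_mem (mem_nhdsWithin_of_mem_nhds (Ioi_mem_nhds one_pos))
    self_mem_nhdsWithin

/-- Along the equilibria `p_β = (3β+1)/(7+5β)`, `q = 2/3` of the Example-1 game,
the Abel limit `lim_{β→1⁻} (1-β) v_β^i(p_β, 2/3)(s)` exists and equals the
Cesàro (average) value at `(1/3, 2/3)`, for both players and each state. -/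
theorem ex1_vanishing_discount_limit :
    ∀ s : Fin 2,
      (∃ L : ℝ,
        Filter.Tendsto
          (fun N : ℕ => (N : ℝ)⁻¹ * ∑ t ∈ Finset.range N,
            (ex1P (2/3) ^ t).mulVec (ex1r1 (1/3) (2/3)) s)
          Filter.atTop (nhds L) ∧
        Filter.Tendsto
          (fun β : ℝ => (1 - β) * ex1v1 β ((3*β+1)/(7+5*β)) (2/3) s)
          (nhdsWithin 1 (Iio 1)) (nhds L)) ∧
      (∃ L : ℝ,
        Filter.Tendsto
          (fun N : ℕ => (N : ℝ)⁻¹ * ∑ t ∈ Finset.range N,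
            (ex1P (2/3) ^ t).mulVec (ex1r2 (1/3) (2/3)) s)
          Filter.atTop (nhds L) ∧
        Filter.Tendsto
          (fun β : ℝ => (1 - β) * ex1v2 β ((3*β+1)/(7+5*β)) (2/3) s)
          (nhdsWithin 1 (Iio 1)) (nhds L)) := by
  intro s
  constructor
  · refine ⟨5, ?_, ?_⟩
    · have h := cesaro_lemma (ex1r1 (1/3) (2/3)) s
      have he : (3 * ex1r1 (1/3) (2/3) 0 + ex1r1 (1/3) (2/3) 1)/4 = 5 := by
        norm_num [ex1r1]
      rwa [he] at h
    · have hg : Tendsto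
          (fun β : ℝ => if s = 0 then (3*(14/3:ℝ) + β*6)/(3+β)
            else (3*β*(14/3:ℝ) + (3-2*β)*6)/(3+β))
          (nhdsWithin 1 (Iio 1)) (nhds 5) := by
        fin_cases s <;> simp only [if_true, if_false] <;>
        · have hc : ContinuousAt (fun β : ℝ => (3*(14/3:ℝ) + β*6)/(3+β)) 1 ∧
              ContinuousAt (fun β : ℝ => (3*β*(14/3:ℝ) + (3-2*β)*6)/(3+β)) 1 := by
            constructor <;> exact ContinuousAt.div (by fun_prop) (by fun_prop) (by norm_num)
          first
          | · have := hc.1.continuousWithinAt (s := Iio 1)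
              simp only [ContinuousWithinAt] at this
              convert this using 2
              all_goals norm_num
          | · have := hc.2.continuousWithinAt (s := Iio 1)
              simp only [ContinuousWithinAt] at this
              convert this using 2
              all_goals norm_num
      refine hg.congr' ?_
      filter_upwards [hmem_Ioo] with β hβ
      rw [ex1v1, hr1, abel_eq ![14/3, 6] hβ.1 hβ.2 s]
      fin_cases s <;> norm_num
  · refine ⟨17/3, ?_, ?_⟩
    · have h := cesaro_lemma (ex1r2 (1/3) (2/3)) s
      have he : (3 * ex1r2 (1/3) (2/3) 0 + ex1r2 (1/3) (2/3) 1)/4 = 17/3 := by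
        norm_num [ex1r2]
      rwa [he] at h
    · have hg : Tendsto
          (fun β : ℝ => if s = 0
            then (3*((8*((3*β+1)/(7+5*β))+13)/3) + β*7)/(3+β)
            else (3*β*((8*((3*β+1)/(7+5*β))+13)/3) + (3-2*β)*7)/(3+β))
          (nhdsWithin 1 (Iio 1)) (nhds (17/3)) := by
        fin_cases s <;> simp only [if_true, if_false] <;>
        · have hc : ContinuousAt
              (fun β : ℝ => (3*((8*((3*β+1)/(7+5*β))+13)/3) + β*7)/(3+β)) 1 ∧
              ContinuousAt
              (fun β : ℝ => (3*β*((8*((3*β+1)/(7+5*β))+13)/3) + (3-2*β)*7)/(3+β)) 1 := by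
            constructor <;>
              exact ContinuousAt.div (by fun_prop (disch := norm_num))
                (by fun_prop) (by norm_num)
          first
          | · have := hc.1.continuousWithinAt (s := Iio 1)
              simp only [ContinuousWithinAt] at this
              convert this using 2
              all_goals norm_num
          | · have := hc.2.continuousWithinAt (s := Iio 1)
              simp only [ContinuousWithinAt] at this
              convert this using 2
              all_goals norm_num
      refine hg.congr' ?_
      filter_upwards [hmem_Ioo] with β hβ
      rw [ex1v2, hr2, abel_eq ![(8*((3*β+1)/(7+5*β))+13)/3, 7] hβ.1 hβ.2 s]
      fin_cases s <;> norm_num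

end
end

section
/- Let n be a finite nonempty index set, let P be the n×n real matrix all of whose rows equal a fixed probability vector w (P(s,s′) = w(s′)), and let r ∈ ℝⁿ. Then for every β ∈ [0,1), (I − βP)⁻¹ r = r + (β/(1−β))·(Σ_{s′} w(s′) r(s′))·𝟏, where 𝟏 ∈ ℝⁿ is the all-ones vector. -/
open Matrix Set

/-- If every row of `P` equals a fixed probability vector `w`, then for every
`β ∈ [0,1)` and any reward vector `r`,
`(I - βP)⁻¹ r = r + (β/(1-β)) (∑ w s' · r s') 𝟏`. -/
theorem resolvent_of_rank_one_stochastic_mulVec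
    {n : Type} [Fintype n] [DecidableEq n] [Nonempty n]
    (w : n → ℝ) (hw0 : ∀ s', 0 ≤ w s') (hw1 : ∑ s', w s' = 1)
    (P : Matrix n n ℝ) (hP : ∀ s s', P s s' = w s') (r : n → ℝ) :
    ∀ β ∈ Ico (0:ℝ) 1,
      ((1 : Matrix n n ℝ) - β • P)⁻¹.mulVec r
        = r + ((β / (1 - β)) * ∑ s', w s' * r s') • (fun _ => (1:ℝ)) := by
  intro β hβ
  obtain ⟨hβ0, hβ1⟩ := hβ
  have h1β : (1 - β) ≠ 0 := by linarith
  set c : ℝ := β / (1 - β) with hc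
  have hPP : P * P = P := by
    ext s s'
    simp only [Matrix.mul_apply, hP]
    rw [← Finset.sum_mul, hw1, one_mul]
  have hinv : ((1 : Matrix n n ℝ) - β • P)⁻¹ = 1 + c • P := by
    apply Matrix.inv_eq_right_inv
    have : ((1 : Matrix n n ℝ) - β • P) * (1 + c • P)
        = 1 + (c - β - β * c) • P := by
      rw [sub_mul, mul_add, mul_add, one_mul, one_mul, Matrix.smul_mul,
        Matrix.smul_mul, Matrix.mul_smul, hPP, smul_smul, Matrix.mul_one]
      module
    rw [this]
    have hcb : c * (1 - β) = β := by
      rw [hc]; field_simp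
    have : c - β - β * c = 0 := by nlinarith [hcb]
    rw [this, zero_smul, add_zero]
  rw [hinv, Matrix.add_mulVec, Matrix.one_mulVec, Matrix.smul_mulVec]
  ext s
  simp [Matrix.mulVec, dotProduct, hP]
end

section
/- (Sufficient conditions C1–C3 for a Blackwell–Nash equilibrium.) Let (f*,g*) be the pure stationary strategy pair given by action selections a¹_s ∈ A¹(s), a²_s ∈ A²(s). Suppose: (C1) (f*,g*) is a β̂-Nash equilibrium for some β̂ ∈ [0,1); (C2) there is a probability vector (w_{s′})_{s′∈S} such that p(s′|s, a¹_s, a²_s) = w_{s′} for all s, s′ ∈ S (the induced Markov chain has state-independent transitions); (C3) for all s ∈ S and a¹ ∈ A¹(s): Σ_{s′} w_{s′} r¹(s′, a¹_{s′}, a²_{s′}) ≥ Σ_{s′} p(s′|s, a¹, a²_s) r¹(s′, a¹_{s′}, a²_{s′}), and for all s ∈ S and a² ∈ A²(s): Σ_{s′} w_{s′} r²(s′, a¹_{s′}, a²_{s′}) ≥ Σ_{s′} p(s′|s, a¹_s, a²) r²(s′, a¹_{s′}, a²_{s′}). Then there exists β₀ ∈ [0,1) such that (f*,g*) is a β-Nash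 equilibrium for every β ∈ [β₀,1), i.e., (f*,g*) is a Blackwell–Nash equilibrium. -/
open Matrix Set BigOperators

noncomputable section

/-- A stationary strategy: at each state a probability vector over available actions. -/
def IsStrategy {S : Type} [Fintype S] {A : S → Type} [∀ s, Fintype (A s)]
    (f : ∀ s, A s → ℝ) : Prop :=
  (∀ s a, 0 ≤ f s a) ∧ ∀ s, ∑ a, f s a = 1

/-- Transition matrix induced by a stationary strategy pair. -/
def transMat {S : Type} [Fintype S] {A1 A2 : S → Type}
    [∀ s, Fintype (A1 s)] [∀ s, Fintype (A2 s)]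
    (p : ∀ s, A1 s → A2 s → S → ℝ)
    (f : ∀ s, A1 s → ℝ) (g : ∀ s, A2 s → ℝ) : Matrix S S ℝ :=
  fun s s' => ∑ a1, ∑ a2, f s a1 * g s a2 * p s a1 a2 s'

/-- Expected one-step reward vector induced by a stationary strategy pair. -/
def rewVec {S : Type} [Fintype S] {A1 A2 : S → Type}
    [∀ s, Fintype (A1 s)] [∀ s, Fintype (A2 s)]
    (r : ∀ s, A1 s → A2 s → ℝ)
    (f : ∀ s, A1 s → ℝ) (g : ∀ s, A2 s → ℝ) : S → ℝ :=
  fun s => ∑ a1, ∑ a2, f s a1 * g s a2 * r s a1 a2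

/-- β-discounted value vector of a stationary strategy pair. -/
def discVal {S : Type} [Fintype S] [DecidableEq S] {A1 A2 : S → Type}
    [∀ s, Fintype (A1 s)] [∀ s, Fintype (A2 s)]
    (β : ℝ) (p : ∀ s, A1 s → A2 s → S → ℝ) (r : ∀ s, A1 s → A2 s → ℝ)
    (f : ∀ s, A1 s → ℝ) (g : ∀ s, A2 s → ℝ) : S → ℝ :=
  ((1 : Matrix S S ℝ) - β • transMat p f g)⁻¹.mulVec (rewVec r f g)

/-- `(f,g)` is a β-Nash equilibrium of the discounted stochastic game. -/
def IsNashEq {S : Type} [Fintype S] [DecidableEq S] {A1 A2 : S → Type}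
    [∀ s, Fintype (A1 s)] [∀ s, Fintype (A2 s)]
    (β : ℝ) (p : ∀ s, A1 s → A2 s → S → ℝ)
    (r1 r2 : ∀ s, A1 s → A2 s → ℝ)
    (f : ∀ s, A1 s → ℝ) (g : ∀ s, A2 s → ℝ) : Prop :=
  IsStrategy f ∧ IsStrategy g ∧
  (∀ f', IsStrategy f' → ∀ s, discVal β p r1 f' g s ≤ discVal β p r1 f g s) ∧
  (∀ g', IsStrategy g' → ∀ s, discVal β p r2 f g' s ≤ discVal β p r2 f g s)

/-- The pure stationary strategy selecting action `a s` in each state `s`. -/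
def pureStrat {S : Type} {A : S → Type} [∀ s, DecidableEq (A s)]
    (a : ∀ s, A s) : ∀ s, A s → ℝ :=
  fun s b => if b = a s then 1 else 0

namespace BNaux

variable {S : Type} [Fintype S] [DecidableEq S]

lemma pow_entry_nonneg {P : Matrix S S ℝ} (h0 : ∀ s s', 0 ≤ P s s') (n : ℕ) :
    ∀ s s', 0 ≤ (P ^ n) s s' := by
  induction n with
  | zero =>
    intro s s'
    simp only [pow_zero, Matrix.one_apply]
    split_ifs <;> norm_num
  | succ n ih =>
    intro s s'
    rw [pow_succ, Matrix.mul_apply]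
    exact Finset.sum_nonneg fun k _ => mul_nonneg (ih s k) (h0 k s')

lemma pow_row_sum {P : Matrix S S ℝ} (h1 : ∀ s, ∑ s', P s s' = 1) (n : ℕ) :
    ∀ s, ∑ s', (P ^ n) s s' = 1 := by
  induction n with
  | zero => intro s; simp [Matrix.one_apply]
  | succ n ih =>
    intro s
    simp only [pow_succ, Matrix.mul_apply]
    rw [Finset.sum_comm]
    simp_rw [← Finset.mul_sum, h1, mul_one]
    exact ih s

lemma pow_entry_le_one {P : Matrix S S ℝ} (h0 : ∀ s s', 0 ≤ P s s')
    (h1 : ∀ s, ∑ s', P s s' = 1) (n : ℕ) (s s' : S) : (P ^ n) s s' ≤ 1 := by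
  have := pow_row_sum h1 n s
  calc (P ^ n) s s' ≤ ∑ t, (P ^ n) s t :=
        Finset.single_le_sum (fun t _ => pow_entry_nonneg h0 n s t) (Finset.mem_univ s')
    _ = 1 := this

lemma summable_entry {P : Matrix S S ℝ} (h0 : ∀ s s', 0 ≤ P s s')
    (h1 : ∀ s, ∑ s', P s s' = 1) {β : ℝ} (hβ0 : 0 ≤ β) (hβ1 : β < 1) (s s' : S) :
    Summable (fun n : ℕ => β ^ n * (P ^ n) s s') := by
  apply Summable.of_nonneg_of_le (fun n => mul_nonneg (pow_nonneg hβ0 n) (pow_entry_nonneg h0 n s s'))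
    (fun n => ?_) (summable_geometric_of_lt_one hβ0 hβ1)
  calc β ^ n * (P ^ n) s s' ≤ β ^ n * 1 :=
        mul_le_mul_of_nonneg_left (pow_entry_le_one h0 h1 n s s') (pow_nonneg hβ0 n)
    _ = β ^ n := mul_one _

/-- Neumann series matrix. -/
def Bmat (β : ℝ) (P : Matrix S S ℝ) : Matrix S S ℝ := fun s s' => ∑' n : ℕ, β ^ n * (P ^ n) s s'


variable {β : ℝ} {P : Matrix S S ℝ}

lemma Bmat_rec (h0 : ∀ s s', 0 ≤ P s s') (h1 : ∀ s, ∑ s', P s s' = 1)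
    (hβ0 : 0 ≤ β) (hβ1 : β < 1) :
    Bmat β P = 1 + β • (P * Bmat β P) := by
  funext s s'
  have hsum : ∀ a b, Summable (fun n : ℕ => β ^ n * (P ^ n) a b) :=
    fun a b => summable_entry h0 h1 hβ0 hβ1 a b
  simp only [Bmat, Matrix.add_apply, Matrix.smul_apply, Matrix.mul_apply, smul_eq_mul]
  rw [Summable.tsum_eq_zero_add (hsum s s')]
  congr 1
  · simp
  · have step : ∀ n : ℕ, β ^ (n + 1) * (P ^ (n + 1)) s s'
        = ∑ k, β * (P s k * (β ^ n * (P ^ n) k s')) := by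
      intro n
      rw [pow_succ' P, Matrix.mul_apply, Finset.mul_sum]
      exact Finset.sum_congr rfl fun k _ => by ring
    rw [tsum_congr step,
      Summable.tsum_finsetSum (fun k _ => ((hsum k s').mul_left (P s k)).mul_left β)]
    simp_rw [tsum_mul_left]
    rw [← Finset.mul_sum]

lemma oneSub_mul_Bmat (h0 : ∀ s s', 0 ≤ P s s') (h1 : ∀ s, ∑ s', P s s' = 1)
    (hβ0 : 0 ≤ β) (hβ1 : β < 1) :
    ((1 : Matrix S S ℝ) - β • P) * Bmat β P = 1 := by
  have h := Bmat_rec h0 h1 hβ0 hβ1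
  rw [Matrix.sub_mul, Matrix.one_mul, Matrix.smul_mul]
  nth_rewrite 1 [h]
  rw [add_sub_cancel_right]

lemma Bmat_mul_oneSub (h0 : ∀ s s', 0 ≤ P s s') (h1 : ∀ s, ∑ s', P s s' = 1)
    (hβ0 : 0 ≤ β) (hβ1 : β < 1) :
    Bmat β P * ((1 : Matrix S S ℝ) - β • P) = 1 :=
  mul_eq_one_comm.mp (oneSub_mul_Bmat h0 h1 hβ0 hβ1)

lemma inv_eq_Bmat (h0 : ∀ s s', 0 ≤ P s s') (h1 : ∀ s, ∑ s', P s s' = 1)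
    (hβ0 : 0 ≤ β) (hβ1 : β < 1) :
    ((1 : Matrix S S ℝ) - β • P)⁻¹ = Bmat β P :=
  Matrix.inv_eq_right_inv (oneSub_mul_Bmat h0 h1 hβ0 hβ1)

lemma Bmat_nonneg (h0 : ∀ s s', 0 ≤ P s s') (hβ0 : 0 ≤ β) (s s' : S) :
    0 ≤ Bmat β P s s' :=
  tsum_nonneg fun n => mul_nonneg (pow_nonneg hβ0 n) (pow_entry_nonneg h0 n s s')

lemma one_le_Bmat_diag (h0 : ∀ s s', 0 ≤ P s s') (h1 : ∀ s, ∑ s', P s s' = 1)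
    (hβ0 : 0 ≤ β) (hβ1 : β < 1) (s : S) :
    1 ≤ Bmat β P s s := by
  have h := Summable.le_tsum (summable_entry h0 h1 hβ0 hβ1 s s) 0
    (fun n _ => mul_nonneg (pow_nonneg hβ0 n) (pow_entry_nonneg h0 n s s))
  simpa [Bmat] using h


section MDP

variable {S : Type} [Fintype S] [DecidableEq S]
variable {A : S → Type} [∀ s, Fintype (A s)] [∀ s, DecidableEq (A s)]

/-- Transition matrix of the MDP obtained by fixing the opponent. -/
def Pmat (q : ∀ s, A s → S → ℝ) (h : ∀ s, A s → ℝ) : Matrix S S ℝ :=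
  fun s s' => ∑ a, h s a * q s a s'

/-- Reward vector of the MDP obtained by fixing the opponent. -/
def rvec (ρ : ∀ s, A s → ℝ) (h : ∀ s, A s → ℝ) : S → ℝ :=
  fun s => ∑ a, h s a * ρ s a

/-- Value of a strategy in the MDP. -/
def mval (β : ℝ) (q : ∀ s, A s → S → ℝ) (ρ : ∀ s, A s → ℝ) (h : ∀ s, A s → ℝ) : S → ℝ :=
  ((1 : Matrix S S ℝ) - β • Pmat q h)⁻¹.mulVec (rvec ρ h)

variable {q : ∀ s, A s → S → ℝ} {ρ : ∀ s, A s → ℝ} {β : ℝ}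

lemma Pmat_nonneg (hq0 : ∀ s a s', 0 ≤ q s a s') {h : ∀ s, A s → ℝ}
    (hh : IsStrategy h) (s s' : S) : 0 ≤ Pmat q h s s' :=
  Finset.sum_nonneg fun a _ => mul_nonneg (hh.1 s a) (hq0 s a s')

lemma Pmat_rowsum (hq1 : ∀ s a, ∑ s', q s a s' = 1) {h : ∀ s, A s → ℝ}
    (hh : IsStrategy h) (s : S) : ∑ s', Pmat q h s s' = 1 := by
  unfold Pmat
  rw [Finset.sum_comm]
  simp_rw [← Finset.mul_sum, hq1, mul_one]
  exact hh.2 s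

lemma pure_isStrategy (a : ∀ s, A s) : IsStrategy (pureStrat a) := by
  constructor
  · intro s b; unfold pureStrat; split_ifs <;> norm_num
  · intro s; simp [pureStrat]

lemma Pmat_pure (a : ∀ s, A s) (s s' : S) :
    Pmat q (pureStrat a) s s' = q s (a s) s' := by
  simp [Pmat, pureStrat, ite_mul, Finset.sum_ite_eq']

lemma rvec_pure (a : ∀ s, A s) (s : S) :
    rvec ρ (pureStrat a) s = ρ s (a s) := by
  simp [rvec, pureStrat, ite_mul, Finset.sum_ite_eq']

lemma mval_fixed (hq0 : ∀ s a s', 0 ≤ q s a s') (hq1 : ∀ s a, ∑ s', q s a s' = 1)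
    {h : ∀ s, A s → ℝ} (hh : IsStrategy h) (hβ0 : 0 ≤ β) (hβ1 : β < 1) :
    ((1 : Matrix S S ℝ) - β • Pmat q h).mulVec (mval β q ρ h) = rvec ρ h := by
  unfold mval
  rw [Matrix.mulVec_mulVec, inv_eq_Bmat (Pmat_nonneg hq0 hh) (Pmat_rowsum hq1 hh) hβ0 hβ1,
    oneSub_mul_Bmat (Pmat_nonneg hq0 hh) (Pmat_rowsum hq1 hh) hβ0 hβ1, Matrix.one_mulVec]

/-- Key identity: difference of an arbitrary vector and the value of `h`. -/
lemma mval_diff (hq0 : ∀ s a s', 0 ≤ q s a s') (hq1 : ∀ s a, ∑ s', q s a s' = 1)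
    {h : ∀ s, A s → ℝ} (hh : IsStrategy h) (hβ0 : 0 ≤ β) (hβ1 : β < 1) (v : S → ℝ) :
    v - mval β q ρ h
      = (Bmat β (Pmat q h)).mulVec
          (fun s => v s - rvec ρ h s - β * (Pmat q h).mulVec v s) := by
  have hP0 := Pmat_nonneg hq0 hh
  have hP1 := Pmat_rowsum hq1 hh
  have hA : ((1 : Matrix S S ℝ) - β • Pmat q h).mulVec (v - mval β q ρ h)
      = fun s => v s - rvec ρ h s - β * (Pmat q h).mulVec v s := by
    rw [Matrix.mulVec_sub, mval_fixed hq0 hq1 hh hβ0 hβ1]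
    funext s
    simp [Matrix.sub_mulVec, Matrix.one_mulVec, Matrix.smul_mulVec]
    ring
  calc v - mval β q ρ h
      = ((1 : Matrix S S ℝ)).mulVec (v - mval β q ρ h) := by rw [Matrix.one_mulVec]
    _ = (Bmat β (Pmat q h) * ((1 : Matrix S S ℝ) - β • Pmat q h)).mulVec (v - mval β q ρ h) := by
        rw [Bmat_mul_oneSub hP0 hP1 hβ0 hβ1]
    _ = (Bmat β (Pmat q h)).mulVec
          (((1 : Matrix S S ℝ) - β • Pmat q h).mulVec (v - mval β q ρ h)) := by
        rw [← Matrix.mulVec_mulVec]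
    _ = _ := by rw [hA]

end MDP

variable {S : Type} [Fintype S] [DecidableEq S]
variable {A : S → Type} [∀ s, Fintype (A s)] [∀ s, DecidableEq (A s)]
variable {q : ∀ s, A s → S → ℝ} {ρ : ∀ s, A s → ℝ} {β : ℝ}

set_option linter.unusedSectionVars false

lemma mulVec_expand {h : ∀ s, A s → ℝ} (v : S → ℝ) (t : S) :
    (Pmat q h).mulVec v t = ∑ b, h t b * ∑ s', q t b s' * v s' := by
  simp only [Matrix.mulVec, dotProduct, Pmat, Finset.sum_mul]
  rw [Finset.sum_comm]
  refine Finset.sum_congr rfl fun b _ => ?_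
  rw [Finset.mul_sum]
  exact Finset.sum_congr rfl fun s' _ => by ring

/-- Sufficiency: the Bellman inequalities imply optimality among stationary strategies. -/
lemma mval_le_of_bellman (hq0 : ∀ s a s', 0 ≤ q s a s') (hq1 : ∀ s a, ∑ s', q s a s' = 1)
    (hβ0 : 0 ≤ β) (hβ1 : β < 1) (a : ∀ s, A s)
    (hbell : ∀ s (b : A s),
      ρ s b + β * ∑ s', q s b s' * mval β q ρ (pureStrat a) s' ≤ mval β q ρ (pureStrat a) s)
    {h : ∀ s, A s → ℝ} (hh : IsStrategy h) (s : S) :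
    mval β q ρ h s ≤ mval β q ρ (pureStrat a) s := by
  set v := mval β q ρ (pureStrat a) with hv
  have hd : ∀ t, 0 ≤ v t - rvec ρ h t - β * (Pmat q h).mulVec v t := by
    intro t
    have expand : ∑ b, h t b * (v t - ρ t b - β * ∑ s', q t b s' * v s')
        = v t - rvec ρ h t - β * (Pmat q h).mulVec v t := by
      simp_rw [mul_sub, Finset.sum_sub_distrib]
      rw [← Finset.sum_mul, hh.2 t, one_mul, mulVec_expand, Finset.mul_sum]
      simp only [rvec]
      congr 1
      exact Finset.sum_congr rfl fun b _ => by ring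
    rw [← expand]
    exact Finset.sum_nonneg fun b _ =>
      mul_nonneg (hh.1 t b) (by have := hbell t b; linarith)
  have hkey := mval_diff (ρ := ρ) hq0 hq1 hh hβ0 hβ1 v
  have h0 : 0 ≤ (v - mval β q ρ h) s := by
    rw [hkey]
    simp only [Matrix.mulVec, dotProduct]
    exact Finset.sum_nonneg fun t _ =>
      mul_nonneg (Bmat_nonneg (Pmat_nonneg hq0 hh) hβ0 s t) (hd t)
  simpa [sub_nonneg] using h0

/-- Necessity: Nash optimality at `β` yields the Bellman inequalities at `β`. -/
lemma bellman_of_nash (hq0 : ∀ s a s', 0 ≤ q s a s') (hq1 : ∀ s a, ∑ s', q s a s' = 1)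
    (a : ∀ s, A s) (hβ0 : 0 ≤ β) (hβ1 : β < 1)
    (hNash : ∀ h, IsStrategy h → ∀ s, mval β q ρ h s ≤ mval β q ρ (pureStrat a) s)
    (s : S) (b : A s) :
    ρ s b + β * ∑ s', q s b s' * mval β q ρ (pureStrat a) s' ≤ mval β q ρ (pureStrat a) s := by
  classical
  set v := mval β q ρ (pureStrat a) with hv
  set h : ∀ t, A t → ℝ := Function.update (pureStrat a) s (fun c => if c = b then 1 else 0)
    with hdef
  have hrow_ne : ∀ t, t ≠ s → h t = pureStrat a t := fun t ht => Function.update_of_ne ht _ _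
  have hrow_s : h s = fun c => if c = b then 1 else 0 := Function.update_self _ _ _
  have hh : IsStrategy h := by
    constructor
    · intro t c
      by_cases ht : t = s
      · subst ht; rw [hrow_s]; dsimp only; split_ifs <;> norm_num
      · rw [hrow_ne t ht]; exact (pure_isStrategy a).1 t c
    · intro t
      by_cases ht : t = s
      · subst ht; rw [hrow_s]; simp
      · rw [hrow_ne t ht]; exact (pure_isStrategy a).2 t
  set d : S → ℝ := fun t => v t - rvec ρ h t - β * (Pmat q h).mulVec v t with hd
  have hdne : ∀ t, t ≠ s → d t = 0 := by
    intro t ht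
    have h1 : rvec ρ h t = rvec ρ (pureStrat a) t := by
      simp [rvec, hrow_ne t ht]
    have h2 : (Pmat q h).mulVec v t = (Pmat q (pureStrat a)).mulVec v t := by
      simp [Matrix.mulVec, dotProduct, Pmat, hrow_ne t ht]
    have h3 := congrFun (mval_fixed (ρ := ρ) hq0 hq1 (pure_isStrategy a) hβ0 hβ1) t
    simp only [Matrix.sub_mulVec, Matrix.one_mulVec, Matrix.smul_mulVec, Pi.sub_apply,
      Pi.smul_apply, smul_eq_mul] at h3
    simp only [hd, h1, h2, ← hv]
    linarith [h3]
  have hds : d s = v s - ρ s b - β * ∑ s', q s b s' * v s' := by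
    have h1 : rvec ρ h s = ρ s b := by
      simp [rvec, hrow_s, ite_mul, Finset.sum_ite_eq']
    have h2 : (Pmat q h).mulVec v s = ∑ s', q s b s' * v s' := by
      rw [mulVec_expand]
      simp [hrow_s, ite_mul, Finset.sum_ite_eq']
    simp only [hd, h1, h2]
  have hkey := congrFun (mval_diff (ρ := ρ) hq0 hq1 hh hβ0 hβ1 v) s
  rw [← hd, Pi.sub_apply] at hkey
  have hmv : (Bmat β (Pmat q h)).mulVec d s = ∑ t, Bmat β (Pmat q h) s t * d t := by
    simp [Matrix.mulVec, dotProduct]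
  have hsingle : ∑ t, Bmat β (Pmat q h) s t * d t = Bmat β (Pmat q h) s s * d s := by
    refine Finset.sum_eq_single s (fun t _ ht => by rw [hdne t ht, mul_zero]) (by simp)
  rw [hmv, hsingle] at hkey
  have hBd : 0 ≤ Bmat β (Pmat q h) s s * d s := by
    rw [← hkey]
    have := hNash h hh s
    linarith
  have hB1 : 1 ≤ Bmat β (Pmat q h) s s :=
    one_le_Bmat_diag (Pmat_nonneg hq0 hh) (Pmat_rowsum hq1 hh) hβ0 hβ1 s
  have hds0 : 0 ≤ d s := by nlinarith
  rw [hds] at hds0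
  linarith

/-- Explicit value under C2. -/
lemma mval_pure_C2 (hq0 : ∀ s a s', 0 ≤ q s a s') (hq1 : ∀ s a, ∑ s', q s a s' = 1)
    (a : ∀ s, A s) (w : S → ℝ) (hw1 : ∑ s', w s' = 1)
    (hw : ∀ s s', q s (a s) s' = w s') (hβ0 : 0 ≤ β) (hβ1 : β < 1) :
    mval β q ρ (pureStrat a)
      = fun s => ρ s (a s) + β / (1 - β) * ∑ s', w s' * ρ s' (a s') := by
  have hb : (0:ℝ) < 1 - β := by linarith
  set m := ∑ s', w s' * ρ s' (a s') with hm
  set c : S → ℝ := fun s => ρ s (a s) + β / (1 - β) * m with hc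
  have hP0 := Pmat_nonneg hq0 (pure_isStrategy a)
  have hP1 := Pmat_rowsum hq1 (pure_isStrategy a)
  have hAc : ((1 : Matrix S S ℝ) - β • Pmat q (pureStrat a)).mulVec c
      = rvec ρ (pureStrat a) := by
    funext s
    have hmv : (Pmat q (pureStrat a)).mulVec c s = m + β / (1 - β) * m := by
      simp only [Matrix.mulVec, dotProduct, Pmat_pure, hw, hc]
      simp_rw [mul_add, Finset.sum_add_distrib, ← Finset.sum_mul, ← hm, hw1, one_mul]
    rw [Matrix.sub_mulVec, Matrix.smul_mulVec, Pi.sub_apply, Pi.smul_apply, smul_eq_mul, hmv]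
    simp only [Matrix.sub_mulVec, Matrix.one_mulVec, Matrix.smul_mulVec, Pi.sub_apply,
      Pi.smul_apply, smul_eq_mul, hmv, rvec_pure, hc]
    field_simp
    ring
  unfold mval
  rw [← hAc, Matrix.mulVec_mulVec, inv_eq_Bmat hP0 hP1 hβ0 hβ1,
    Bmat_mul_oneSub hP0 hP1 hβ0 hβ1, Matrix.one_mulVec]

/-- Core single-player result combining C1–C3. -/
lemma player_blackwell (q : ∀ s, A s → S → ℝ) (ρ : ∀ s, A s → ℝ)
    (hq0 : ∀ s a s', 0 ≤ q s a s') (hq1 : ∀ s a, ∑ s', q s a s' = 1)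
    (a : ∀ s, A s) (w : S → ℝ) (hw1 : ∑ s', w s' = 1)
    (hw : ∀ s s', q s (a s) s' = w s')
    {βhat : ℝ} (hβh0 : 0 ≤ βhat) (hβh1 : βhat < 1)
    (hNash : ∀ h, IsStrategy h → ∀ s, mval βhat q ρ h s ≤ mval βhat q ρ (pureStrat a) s)
    (hC3 : ∀ s (b : A s), ∑ s', q s b s' * ρ s' (a s') ≤ ∑ s', w s' * ρ s' (a s'))
    {β : ℝ} (hββ : βhat ≤ β) (hβlt : β < 1) :
    ∀ h, IsStrategy h → ∀ s, mval β q ρ h s ≤ mval β q ρ (pureStrat a) s := by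
  have hβ0' : 0 ≤ β := le_trans hβh0 hββ
  set m := ∑ s', w s' * ρ s' (a s') with hm
  have hexp : ∀ (γ : ℝ) (s : S) (b : A s),
      ∑ s', q s b s' * (ρ s' (a s') + γ * m)
        = (∑ s', q s b s' * ρ s' (a s')) + γ * m := by
    intro γ s b
    simp_rw [mul_add, Finset.sum_add_distrib, ← Finset.sum_mul, hq1 s b, one_mul]
  have hkey : ∀ (s : S) (b : A s),
      ρ s b - ρ s (a s) ≤ βhat * (m - ∑ s', q s b s' * ρ s' (a s')) := by
    intro s b
    have hb := bellman_of_nash hq0 hq1 a hβh0 hβh1 hNash s b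
    simp only [mval_pure_C2 hq0 hq1 a w hw1 hw hβh0 hβh1, ← hm] at hb
    rw [hexp] at hb
    have hγ : βhat / (1 - βhat) * (1 - βhat) = βhat :=
      div_mul_cancel₀ _ (by linarith)
    set γ := βhat / (1 - βhat) with hγdef
    have hγm : (γ * (1 - βhat)) * m = βhat * m := by rw [hγ]
    ring_nf at hb hγm ⊢
    linarith
  have hbell : ∀ (s : S) (b : A s),
      ρ s b + β * ∑ s', q s b s' * mval β q ρ (pureStrat a) s'
        ≤ mval β q ρ (pureStrat a) s := by
    intro s b
    simp only [mval_pure_C2 hq0 hq1 a w hw1 hw hβ0' hβlt, ← hm]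
    rw [hexp]
    have hγ : β / (1 - β) * (1 - β) = β := div_mul_cancel₀ _ (by linarith)
    set γ := β / (1 - β) with hγdef
    have hγm : (γ * (1 - β)) * m = β * m := by rw [hγ]
    have hprod : βhat * (m - ∑ s', q s b s' * ρ s' (a s'))
        ≤ β * (m - ∑ s', q s b s' * ρ s' (a s')) :=
      mul_le_mul_of_nonneg_right hββ (sub_nonneg.2 (hC3 s b))
    have hk := hkey s b
    ring_nf at hγm hprod hk ⊢
    linarith
  exact fun h hh s => mval_le_of_bellman hq0 hq1 hβ0' hβlt a hbell hh s

end BNaux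

/-- Conditions C1–C3 are sufficient for a pure stationary Nash equilibrium of a
finite discounted stochastic game to be a Blackwell–Nash equilibrium. -/
theorem blackwell_nash_of_C1_C2_C3
    {S : Type} [Fintype S] [DecidableEq S] [Nonempty S]
    {A1 A2 : S → Type}
    [∀ s, Fintype (A1 s)] [∀ s, DecidableEq (A1 s)] [∀ s, Nonempty (A1 s)]
    [∀ s, Fintype (A2 s)] [∀ s, DecidableEq (A2 s)] [∀ s, Nonempty (A2 s)]
    (p : ∀ s, A1 s → A2 s → S → ℝ) (r1 r2 : ∀ s, A1 s → A2 s → ℝ)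
    (hp0 : ∀ s a1 a2 s', 0 ≤ p s a1 a2 s')
    (hp1 : ∀ s a1 a2, ∑ s', p s a1 a2 s' = 1)
    (asel1 : ∀ s, A1 s) (asel2 : ∀ s, A2 s)
    (βhat : ℝ) (hβhat : βhat ∈ Ico (0:ℝ) 1)
    (hC1 : IsNashEq βhat p r1 r2 (pureStrat asel1) (pureStrat asel2))
    (w : S → ℝ) (hw0 : ∀ s', 0 ≤ w s') (hw1 : ∑ s', w s' = 1)
    (hC2 : ∀ s s', p s (asel1 s) (asel2 s) s' = w s')
    (hC3a : ∀ s (b : A1 s),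
      ∑ s', p s b (asel2 s) s' * r1 s' (asel1 s') (asel2 s')
        ≤ ∑ s', w s' * r1 s' (asel1 s') (asel2 s'))
    (hC3b : ∀ s (b : A2 s),
      ∑ s', p s (asel1 s) b s' * r2 s' (asel1 s') (asel2 s')
        ≤ ∑ s', w s' * r2 s' (asel1 s') (asel2 s')) :
    ∃ β₀ ∈ Ico (0:ℝ) 1, ∀ β ∈ Ico β₀ 1,
      IsNashEq β p r1 r2 (pureStrat asel1) (pureStrat asel2) := by
  classical
  obtain ⟨hβh0, hβh1⟩ := hβhat
  -- player 1 MDP data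
  have hbr1 : ∀ (f : ∀ s, A1 s → ℝ) (β : ℝ),
      discVal β p r1 f (pureStrat asel2)
        = BNaux.mval β (fun s b s' => p s b (asel2 s) s') (fun s b => r1 s b (asel2 s)) f := by
    intro f β
    unfold discVal BNaux.mval
    have hT : transMat p f (pureStrat asel2)
        = BNaux.Pmat (fun s b s' => p s b (asel2 s) s') f := by
      funext s s'
      simp [transMat, BNaux.Pmat, pureStrat, mul_ite, ite_mul, mul_one, mul_zero, zero_mul,
        Finset.sum_ite_eq']
    have hR : rewVec r1 f (pureStrat asel2)
        = BNaux.rvec (fun s b => r1 s b (asel2 s)) f := by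
      funext s
      simp [rewVec, BNaux.rvec, pureStrat, mul_ite, ite_mul, mul_one, mul_zero, zero_mul,
        Finset.sum_ite_eq']
    rw [hT, hR]
  -- player 2 MDP data
  have hbr2 : ∀ (g : ∀ s, A2 s → ℝ) (β : ℝ),
      discVal β p r2 (pureStrat asel1) g
        = BNaux.mval β (fun s b s' => p s (asel1 s) b s') (fun s b => r2 s (asel1 s) b) g := by
    intro g β
    unfold discVal BNaux.mval
    have hT : transMat p (pureStrat asel1) g
        = BNaux.Pmat (fun s b s' => p s (asel1 s) b s') g := by
      funext s s'
      rw [transMat, Finset.sum_comm]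
      simp [BNaux.Pmat, pureStrat, mul_ite, ite_mul, mul_one, mul_zero, zero_mul, one_mul,
        Finset.sum_ite_eq']
    have hR : rewVec r2 (pureStrat asel1) g
        = BNaux.rvec (fun s b => r2 s (asel1 s) b) g := by
      funext s
      rw [rewVec, Finset.sum_comm]
      simp [BNaux.rvec, pureStrat, mul_ite, ite_mul, mul_one, mul_zero, zero_mul, one_mul,
        Finset.sum_ite_eq']
    rw [hT, hR]
  refine ⟨βhat, ⟨hβh0, hβh1⟩, fun β hβ => ?_⟩
  obtain ⟨hβ1, hβ2⟩ := hβ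
  have hN1 : ∀ h, IsStrategy h → ∀ s,
      BNaux.mval βhat (fun s b s' => p s b (asel2 s) s') (fun s b => r1 s b (asel2 s)) h s
        ≤ BNaux.mval βhat (fun s b s' => p s b (asel2 s) s') (fun s b => r1 s b (asel2 s))
            (pureStrat asel1) s := by
    intro h hh s
    have := hC1.2.2.1 h hh s
    rwa [hbr1, hbr1] at this
  have hN2 : ∀ h, IsStrategy h → ∀ s,
      BNaux.mval βhat (fun s b s' => p s (asel1 s) b s') (fun s b => r2 s (asel1 s) b) h s
        ≤ BNaux.mval βhat (fun s b s' => p s (asel1 s) b s') (fun s b => r2 s (asel1 s) b)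
            (pureStrat asel2) s := by
    intro h hh s
    have := hC1.2.2.2 h hh s
    rwa [hbr2, hbr2] at this
  have hP1 := BNaux.player_blackwell (fun s b s' => p s b (asel2 s) s')
    (fun s b => r1 s b (asel2 s)) (fun s b s' => hp0 s b (asel2 s) s')
    (fun s b => hp1 s b (asel2 s)) asel1 w hw1 (fun s s' => hC2 s s') hβh0 hβh1 hN1
    (fun s b => hC3a s b) hβ1 hβ2
  have hP2 := BNaux.player_blackwell (fun s b s' => p s (asel1 s) b s')
    (fun s b => r2 s (asel1 s) b) (fun s b s' => hp0 s (asel1 s) b s')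
    (fun s b => hp1 s (asel1 s) b) asel2 w hw1 (fun s s' => hC2 s s') hβh0 hβh1 hN2
    (fun s b => hC3b s b) hβ1 hβ2
  refine ⟨BNaux.pure_isStrategy asel1, BNaux.pure_isStrategy asel2, ?_, ?_⟩
  · intro f' hf' s
    rw [hbr1, hbr1]
    exact hP1 f' hf' s
  · intro g' hg' s
    rw [hbr2, hbr2]
    exact hP2 g' hg' s

end
end

section
/- (Existence of a Blackwell–Nash equilibrium for continuous-time SC-AR games.) Suppose the transition rates do not depend on player 1's action, i.e., μ(s′,s,a¹,a²) = μ(s′,s,a²) for all s′, s ∈ S, a¹ ∈ A¹(s), a² ∈ A²(s), and player 1's rewards are additive, i.e., there exist functions r₁¹, r₂¹ with r¹(s,a¹,a²) = r₁¹(s,a¹) + r₂¹(s,a²) for all s, a¹, a². Then there exist a pure stationary strategy pair (f*,g*) and α₀ > 0 such that (f*,g*) is an α-Nash equilibrium for every α ∈ (0, α₀]; i.e., every continuous-time SC-AR stochastic game possesses a stationary deterministic Blackwell–Nash equilibrium. -/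
open Matrix Set BigOperators

noncomputable section

/-- Transition rate matrix induced by a stationary strategy pair. -/
def rateMat {S : Type} [Fintype S] {A1 A2 : S → Type}
    [∀ s, Fintype (A1 s)] [∀ s, Fintype (A2 s)]
    (μ : ∀ s, A1 s → A2 s → S → ℝ)
    (f : ∀ s, A1 s → ℝ) (g : ∀ s, A2 s → ℝ) : Matrix S S ℝ :=
  fun s s' => ∑ a1, ∑ a2, f s a1 * g s a2 * μ s a1 a2 s'

/-- α-discounted value vector of a stationary strategy pair in continuous time. -/
def ctVal {S : Type} [Fintype S] [DecidableEq S] {A1 A2 : S → Type}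
    [∀ s, Fintype (A1 s)] [∀ s, Fintype (A2 s)]
    (α : ℝ) (μ : ∀ s, A1 s → A2 s → S → ℝ) (r : ∀ s, A1 s → A2 s → ℝ)
    (f : ∀ s, A1 s → ℝ) (g : ∀ s, A2 s → ℝ) : S → ℝ :=
  (α • (1 : Matrix S S ℝ) - rateMat μ f g)⁻¹.mulVec (rewVec r f g)

/-- `(f,g)` is an α-Nash equilibrium of the continuous-time discounted game. -/
def IsNashEqCT {S : Type} [Fintype S] [DecidableEq S] {A1 A2 : S → Type}
    [∀ s, Fintype (A1 s)] [∀ s, Fintype (A2 s)]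
    (α : ℝ) (μ : ∀ s, A1 s → A2 s → S → ℝ)
    (r1 r2 : ∀ s, A1 s → A2 s → ℝ)
    (f : ∀ s, A1 s → ℝ) (g : ∀ s, A2 s → ℝ) : Prop :=
  IsStrategy f ∧ IsStrategy g ∧
  (∀ f', IsStrategy f' → ∀ s, ctVal α μ r1 f' g s ≤ ctVal α μ r1 f g s) ∧
  (∀ g', IsStrategy g' → ∀ s, ctVal α μ r2 f g' s ≤ ctVal α μ r2 f g s)

----------------------------------------------------------------------
-- Auxiliary development
----------------------------------------------------------------------

set_option linter.unusedSectionVars false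
set_option maxHeartbeats 1000000

namespace CTSCAR

open Polynomial

variable {S : Type} [Fintype S] [DecidableEq S] [Nonempty S]

/-- A conservative rate matrix: nonnegative off-diagonal, zero row sums. -/
def RateMatrix (Q : Matrix S S ℝ) : Prop :=
  (∀ s s', s ≠ s' → 0 ≤ Q s s') ∧ ∀ s, ∑ s', Q s s' = 0

lemma resolvent_apply (Q : Matrix S S ℝ) (α : ℝ) (x : S → ℝ) (s : S) :
    ((α • (1 : Matrix S S ℝ) - Q).mulVec x) s = α * x s - ∑ s', Q s s' * x s' := by
  simp only [Matrix.mulVec, dotProduct, Matrix.sub_apply, Matrix.smul_apply, Matrix.one_apply,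
    smul_eq_mul, sub_mul, Finset.sum_sub_distrib, mul_ite, mul_one, mul_zero, ite_mul, zero_mul]
  rw [Finset.sum_ite_eq Finset.univ s (fun s' => α * x s')]
  simp

lemma maxprin {Q : Matrix S S ℝ} (hQ : RateMatrix Q) {α : ℝ} (hα : 0 < α)
    {x : S → ℝ} (hy : ∀ s, 0 ≤ ((α • (1 : Matrix S S ℝ) - Q).mulVec x) s) :
    ∀ s, 0 ≤ x s := by
  obtain ⟨s₀, -, hs₀⟩ := Finset.exists_min_image Finset.univ x ⟨Classical.arbitrary S, Finset.mem_univ _⟩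
  intro s
  have hmin : x s₀ ≤ x s := hs₀ s (Finset.mem_univ s)
  have h1 : ∑ s', Q s₀ s' * x s' ≥ ∑ s', Q s₀ s' * x s₀ := by
    apply Finset.sum_le_sum
    intro s' _
    rcases eq_or_ne s₀ s' with h | h
    · simp [h]
    · exact mul_le_mul_of_nonneg_left (hs₀ s' (Finset.mem_univ _)) (hQ.1 s₀ s' h)
  have h2 : ∑ s', Q s₀ s' * x s₀ = 0 := by
    rw [← Finset.sum_mul, hQ.2 s₀, zero_mul]
  have h3 := hy s₀
  rw [resolvent_apply] at h3
  have h4 : 0 ≤ α * x s₀ := by nlinarith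
  have h5 : 0 ≤ x s₀ := nonneg_of_mul_nonneg_right h4 hα
  linarith

lemma res_det_ne_zero {Q : Matrix S S ℝ} (hQ : RateMatrix Q) {α : ℝ} (hα : 0 < α) :
    (α • (1 : Matrix S S ℝ) - Q).det ≠ 0 := by
  intro hdet
  obtain ⟨v, hv0, hv⟩ := (Matrix.exists_mulVec_eq_zero_iff).2 hdet
  have h1 : ∀ s, 0 ≤ v s := maxprin hQ hα (fun s => by rw [hv]; simp)
  have h2 : ∀ s, 0 ≤ (-v) s := maxprin hQ hα (fun s => by
    rw [Matrix.mulVec_neg, hv]; simp)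
  apply hv0
  funext s
  have := h1 s; have := h2 s; simp only [Pi.neg_apply] at *
  have : v s = 0 := le_antisymm (by linarith) (h1 s)
  simpa using this

lemma res_inv_col {Q : Matrix S S ℝ} (hQ : RateMatrix Q) {α : ℝ} (hα : 0 < α) (j : S) :
    (α • (1 : Matrix S S ℝ) - Q).mulVec (fun s => (α • (1 : Matrix S S ℝ) - Q)⁻¹ s j)
      = Pi.single j 1 := by
  have h := Matrix.mul_nonsing_inv _ (isUnit_iff_ne_zero.2 (res_det_ne_zero hQ hα))
  have h2 : (α • (1 : Matrix S S ℝ) - Q)⁻¹.mulVec (Pi.single j 1)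
      = fun s => (α • (1 : Matrix S S ℝ) - Q)⁻¹ s j := by
    rw [Matrix.mulVec_single]; simp; rfl
  rw [← h2, Matrix.mulVec_mulVec, h, Matrix.one_mulVec]

lemma res_inv_nonneg {Q : Matrix S S ℝ} (hQ : RateMatrix Q) {α : ℝ} (hα : 0 < α) (s j : S) :
    0 ≤ (α • (1 : Matrix S S ℝ) - Q)⁻¹ s j := by
  refine maxprin hQ hα (x := fun s => (α • (1 : Matrix S S ℝ) - Q)⁻¹ s j) ?_ s
  intro t
  rw [res_inv_col hQ hα]
  rcases eq_or_ne t j with h | h <;> simp [h, Pi.single_apply]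

lemma res_inv_diag_pos {Q : Matrix S S ℝ} (hQ : RateMatrix Q) {α : ℝ} (hα : 0 < α) (j : S) :
    0 < (α • (1 : Matrix S S ℝ) - Q)⁻¹ j j := by
  set x : S → ℝ := fun s => (α • (1 : Matrix S S ℝ) - Q)⁻¹ s j with hx
  have hcol := res_inv_col hQ hα (j := j)
  have hxnn : ∀ s, 0 ≤ x s := fun s => res_inv_nonneg hQ hα s j
  have heq : α * x j - ∑ s', Q j s' * x s' = 1 := by
    have := congrFun hcol j
    rw [resolvent_apply] at this
    simpa using this
  have hdiag : Q j j ≤ 0 := by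
    have := hQ.2 j
    have h2 : ∑ s' ∈ Finset.univ.erase j, Q j s' ≥ 0 :=
      Finset.sum_nonneg (fun s' hs' => hQ.1 j s' (Ne.symm (Finset.ne_of_mem_erase hs')))
    have h3 : Q j j + ∑ s' ∈ Finset.univ.erase j, Q j s' = 0 := by
      rw [← this, Finset.add_sum_erase _ _ (Finset.mem_univ j)]
    linarith
  have hsum : ∑ s', Q j s' * x s' ≥ Q j j * x j := by
    rw [← Finset.add_sum_erase _ (fun s' => Q j s' * x s') (Finset.mem_univ j)]
    have : 0 ≤ ∑ s' ∈ Finset.univ.erase j, Q j s' * x s' :=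
      Finset.sum_nonneg (fun s' hs' =>
        mul_nonneg (hQ.1 j s' (Ne.symm (Finset.ne_of_mem_erase hs'))) (hxnn s'))
    linarith
  rcases lt_or_eq_of_le (hxnn j) with h | h
  · exact h
  · exfalso; nlinarith [heq, hsum, hdiag, h.symm]

lemma mulVec_mono {R : Matrix S S ℝ} (hR : ∀ s s', 0 ≤ R s s') {u w : S → ℝ}
    (h : ∀ s, u s ≤ w s) : ∀ s, R.mulVec u s ≤ R.mulVec w s := by
  intro s
  simp only [Matrix.mulVec, dotProduct]
  exact Finset.sum_le_sum (fun s' _ => mul_le_mul_of_nonneg_left (h s') (hR s s'))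

lemma res_mul_inv_vec {Q : Matrix S S ℝ} (hQ : RateMatrix Q) {α : ℝ} (hα : 0 < α) (r : S → ℝ) :
    (α • (1 : Matrix S S ℝ) - Q).mulVec ((α • (1 : Matrix S S ℝ) - Q)⁻¹.mulVec r) = r := by
  rw [Matrix.mulVec_mulVec, Matrix.mul_nonsing_inv _ (isUnit_iff_ne_zero.2 (res_det_ne_zero hQ hα)),
    Matrix.one_mulVec]

/-- Comparison lemma. -/
lemma value_le {Q' : Matrix S S ℝ} (hQ' : RateMatrix Q') {α : ℝ} (hα : 0 < α)
    {r' v : S → ℝ} (h : ∀ s, r' s + (Q'.mulVec v) s ≤ α * v s) :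
    ∀ s, ((α • (1 : Matrix S S ℝ) - Q')⁻¹.mulVec r') s ≤ v s := by
  set M := α • (1 : Matrix S S ℝ) - Q' with hM
  have hw : ∀ s, r' s ≤ (M.mulVec v) s := by
    intro s
    rw [hM, resolvent_apply]
    have : (Q'.mulVec v) s = ∑ s', Q' s s' * v s' := rfl
    linarith [h s, this ▸ h s]
  have hinv : ∀ s, (M⁻¹.mulVec r') s ≤ (M⁻¹.mulVec (M.mulVec v)) s :=
    mulVec_mono (fun s j => res_inv_nonneg hQ' hα s j) hw
  intro s
  have : M⁻¹.mulVec (M.mulVec v) = v := by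
    rw [Matrix.mulVec_mulVec, Matrix.nonsing_inv_mul _ (isUnit_iff_ne_zero.2 (res_det_ne_zero hQ' hα)),
      Matrix.one_mulVec]
  rw [this] at hinv
  exact hinv s

section Game

variable {A2 : S → Type} [∀ s, Fintype (A2 s)] [∀ s, DecidableEq (A2 s)] [∀ s, Nonempty (A2 s)]

lemma sum_pure {A : S → Type} [∀ s, Fintype (A s)] [∀ s, DecidableEq (A s)]
    (c : ∀ s, A s) (s : S) (X : A s → ℝ) :
    ∑ a, pureStrat c s a * X a = X (c s) := by
  simp [pureStrat, ite_mul, Finset.sum_ite_eq']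

lemma pure_isStrategy {A : S → Type} [∀ s, Fintype (A s)] [∀ s, DecidableEq (A s)]
    (b : ∀ s, A s) :
    (∀ s a, 0 ≤ pureStrat b s a) ∧ ∀ s, ∑ a, pureStrat b s a = 1 := by
  constructor
  · intro s a; unfold pureStrat; positivity
  · intro s; simp [pureStrat]

variable (qb : ∀ s, A2 s → S → ℝ)

/-- rate matrix induced by a player-2 strategy (player 1 irrelevant). -/
def Qg (g : ∀ s, A2 s → ℝ) : Matrix S S ℝ := fun s s' => ∑ a2, g s a2 * qb s a2 s'

lemma Qg_rate (hq0 : ∀ s a2 s', s' ≠ s → 0 ≤ qb s a2 s')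
    (hqsum : ∀ s a2, ∑ s', qb s a2 s' = 0)
    {g : ∀ s, A2 s → ℝ} (hg : (∀ s a, 0 ≤ g s a) ∧ ∀ s, ∑ a, g s a = 1) :
    RateMatrix (Qg qb g) := by
  constructor
  · intro s s' hne
    exact Finset.sum_nonneg fun a2 _ => mul_nonneg (hg.1 s a2) (hq0 s a2 s' (Ne.symm hne))
  · intro s
    simp only [Qg]
    rw [Finset.sum_comm]
    simp only [← Finset.mul_sum]
    simp [hqsum s]

lemma Qg_pure (b : ∀ s, A2 s) (s s' : S) : Qg qb (pureStrat b) s s' = qb s (b s) s' := by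
  exact sum_pure b s (fun a2 => qb s a2 s')

lemma Qg_mulVec (g : ∀ s, A2 s → ℝ) (v : S → ℝ) (s : S) :
    (Qg qb g).mulVec v s = ∑ a2, g s a2 * ∑ s', qb s a2 s' * v s' := by
  simp only [Matrix.mulVec, dotProduct, Qg, Finset.sum_mul, Finset.mul_sum]
  rw [Finset.sum_comm]
  congr 1; funext a2; congr 1; funext s'; ring

variable (rb : ∀ s, A2 s → ℝ)

/-- value of a pure player-2 strategy. -/
def vv (α : ℝ) (b : ∀ s, A2 s) : S → ℝ :=
  (α • (1 : Matrix S S ℝ) - Qg qb (pureStrat b))⁻¹.mulVec (fun s => rb s (b s))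

/-- A pure maximizer of the total value satisfies the discounted optimality inequalities. -/
lemma exists_opt (hq0 : ∀ s a2 s', s' ≠ s → 0 ≤ qb s a2 s')
    (hqsum : ∀ s a2, ∑ s', qb s a2 s' = 0)
    {α : ℝ} (hα : 0 < α) {b : ∀ s, A2 s}
    (hmax : ∀ b' : ∀ s, A2 s, ∑ s, vv qb rb α b' s ≤ ∑ s, vv qb rb α b s) :
    ∀ s a2, rb s a2 + ∑ s', qb s a2 s' * vv qb rb α b s' ≤ α * vv qb rb α b s := by
  by_contra hcon
  push_neg at hcon
  obtain ⟨s₀, a2, hviol⟩ := hcon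
  set v := vv qb rb α b with hvdef
  set b' : ∀ s, A2 s := Function.update b s₀ a2 with hb'
  have hRb : RateMatrix (Qg qb (pureStrat b)) := Qg_rate qb hq0 hqsum (pure_isStrategy b)
  have hRb' : RateMatrix (Qg qb (pureStrat b')) := Qg_rate qb hq0 hqsum (pure_isStrategy b')
  have hv : ∀ s, α * v s - ∑ s', qb s (b s) s' * v s' = rb s (b s) := by
    intro s
    have := congrFun (res_mul_inv_vec hRb hα (fun s => rb s (b s))) s
    rw [resolvent_apply] at this
    simpa [Qg_pure, hvdef, vv] using this
  set d : S → ℝ := fun s => rb s (b' s) + ∑ s', qb s (b' s) s' * v s' - α * v s with hd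
  have hd0 : ∀ s, s ≠ s₀ → d s = 0 := by
    intro s hs
    have hb's : b' s = b s := Function.update_of_ne hs _ _
    simp only [hd, hb's]
    linarith [hv s]
  have hds₀ : 0 < d s₀ := by
    have hb's : b' s₀ = a2 := Function.update_self _ _ _
    simp only [hd, hb's]
    linarith [hviol]
  have hdnn : ∀ s, 0 ≤ d s := by
    intro s
    rcases eq_or_ne s s₀ with h | h
    · subst h; exact le_of_lt hds₀
    · rw [hd0 s h]
  set M' := α • (1 : Matrix S S ℝ) - Qg qb (pureStrat b') with hM'
  set v' := vv qb rb α b' with hv'def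
  have hMv' : ∀ s, α * v' s - ∑ s', qb s (b' s) s' * v' s' = rb s (b' s) := by
    intro s
    have := congrFun (res_mul_inv_vec hRb' hα (fun s => rb s (b' s))) s
    rw [resolvent_apply] at this
    simpa [Qg_pure, hv'def, vv] using this
  have hMu : M'.mulVec (fun s => v' s - v s) = d := by
    funext s
    rw [hM', resolvent_apply]
    have expand : ∑ s', Qg qb (pureStrat b') s s' * (v' s' - v s')
        = ∑ s', qb s (b' s) s' * v' s' - ∑ s', qb s (b' s) s' * v s' := by
      rw [← Finset.sum_sub_distrib]
      congr 1; funext s'; rw [Qg_pure]; ring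
    rw [expand]
    have h1 := hMv' s
    simp only [hd]
    ring_nf
    linarith [hMv' s]
  have hu : (fun s => v' s - v s) = M'⁻¹.mulVec d := by
    have h2 : M'⁻¹.mulVec (M'.mulVec (fun s => v' s - v s)) = (fun s => v' s - v s) := by
      rw [Matrix.mulVec_mulVec,
        Matrix.nonsing_inv_mul _ (isUnit_iff_ne_zero.2 (res_det_ne_zero hRb' hα)),
        Matrix.one_mulVec]
    rw [← h2, hMu]
  have hunn : ∀ s, 0 ≤ v' s - v s := by
    intro s
    have := congrFun hu s
    rw [this]
    exact Finset.sum_nonneg fun s' _ =>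
      mul_nonneg (res_inv_nonneg hRb' hα s s') (hdnn s')
  have hus₀ : 0 < v' s₀ - v s₀ := by
    have h3 := congrFun hu s₀
    rw [h3]
    have h4 : M'⁻¹.mulVec d s₀ = ∑ s', M'⁻¹ s₀ s' * d s' := rfl
    rw [h4]
    rw [← Finset.add_sum_erase _ (fun s' => M'⁻¹ s₀ s' * d s') (Finset.mem_univ s₀)]
    have hz : ∑ s' ∈ Finset.univ.erase s₀, M'⁻¹ s₀ s' * d s' = 0 := by
      apply Finset.sum_eq_zero
      intro s' hs'
      rw [hd0 s' (Finset.ne_of_mem_erase hs'), mul_zero]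
    rw [hz, add_zero]
    exact mul_pos (res_inv_diag_pos hRb' hα s₀) hds₀
  have : ∑ s, v s < ∑ s, v' s := by
    apply Finset.sum_lt_sum (fun s _ => by linarith [hunn s])
    exact ⟨s₀, Finset.mem_univ s₀, by linarith [hus₀]⟩
  exact absurd (hmax b') (by linarith)

end Game

/-- Eventual-sign lemma for polynomials near `0⁺`. -/
lemma poly_eventually_nonneg (p : Polynomial ℝ)
    (h : ∀ ε > (0:ℝ), ∃ x, x ∈ Ioc (0:ℝ) ε ∧ 0 ≤ p.eval x) :
    ∃ ε > (0:ℝ), ∀ x ∈ Ioc (0:ℝ) ε, 0 ≤ p.eval x := by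
  rcases eq_or_ne p 0 with rfl | hp
  · exact ⟨1, one_pos, fun x _ => by simp⟩
  have hfin : Set.Finite {x : ℝ | p.IsRoot x} := p.finite_setOf_isRoot hp
  set F : Finset ℝ := hfin.toFinset.filter (fun x => 0 < x) with hF
  have hnoroot : ∃ ε > (0:ℝ), ∀ x ∈ Ioc (0:ℝ) ε, ¬ p.IsRoot x := by
    rcases F.eq_empty_or_nonempty with hFe | hFne
    · refine ⟨1, one_pos, fun x hx hroot => ?_⟩
      have : x ∈ F := by
        rw [hF, Finset.mem_filter, Set.Finite.mem_toFinset]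
        exact ⟨hroot, hx.1⟩
      rw [hFe] at this; exact absurd this (Finset.notMem_empty x)
    · set m := F.min' hFne with hm
      have hmpos : 0 < m := (Finset.mem_filter.1 (F.min'_mem hFne)).2
      refine ⟨m / 2, by linarith, fun x hx hroot => ?_⟩
      have hxF : x ∈ F := by
        rw [hF, Finset.mem_filter, Set.Finite.mem_toFinset]
        exact ⟨hroot, hx.1⟩
      have := F.min'_le x hxF
      have := hx.2
      linarith
  obtain ⟨ε, hε, hnr⟩ := hnoroot
  refine ⟨ε, hε, fun x hx => ?_⟩
  by_contra hneg
  push_neg at hneg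
  obtain ⟨x₀, hx₀, hx₀v⟩ := h ε hε
  have hsub : Icc (min x x₀) (max x x₀) ⊆ Ioc 0 ε := by
    intro y hy
    constructor
    · have : 0 < min x x₀ := lt_min hx.1 hx₀.1
      linarith [hy.1]
    · have : max x x₀ ≤ ε := max_le hx.2 hx₀.2
      linarith [hy.2]
  rcases le_total x x₀ with hle | hle
  · have h0 : (0:ℝ) ∈ Icc (p.eval x) (p.eval x₀) := ⟨le_of_lt hneg, hx₀v⟩
    obtain ⟨y, hy, hyv⟩ := intermediate_value_Icc hle
      ((p.continuous).continuousOn) h0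
    exact hnr y (hsub (by simpa [min_eq_left hle, max_eq_right hle] using hy)) hyv
  · have h0 : (0:ℝ) ∈ Icc (p.eval x) (p.eval x₀) := ⟨le_of_lt hneg, hx₀v⟩
    obtain ⟨y, hy, hyv⟩ := intermediate_value_Icc' hle
      ((p.continuous).continuousOn) h0
    exact hnr y (hsub (by simpa [min_eq_right hle, max_eq_left hle] using hy)) hyv

section Poly

variable (Q : Matrix S S ℝ) (r : S → ℝ)

/-- `X•1 - Q` as a polynomial matrix. -/
def Mp : Matrix S S ℝ[X] := (Polynomial.X : ℝ[X]) • (1 : Matrix S S ℝ[X]) - Q.map Polynomial.C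

lemma Mp_eval (α : ℝ) :
    (Polynomial.evalRingHom α).mapMatrix (Mp Q) = α • (1 : Matrix S S ℝ) - Q := by
  ext s s'
  simp only [Mp, RingHom.mapMatrix_apply, Matrix.map_apply, Matrix.sub_apply, Matrix.smul_apply,
    Matrix.one_apply, smul_eq_mul, coe_evalRingHom]
  rcases eq_or_ne s s' with h | h <;> simp [h]

def Dp : ℝ[X] := (Mp Q).det

def Pp (s : S) : ℝ[X] := ∑ s', (Mp Q).adjugate s s' * Polynomial.C (r s')

lemma Dp_eval (α : ℝ) : (Dp Q).eval α = (α • (1 : Matrix S S ℝ) - Q).det := by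
  have := (Polynomial.evalRingHom α).map_det (Mp Q)
  rw [Mp_eval] at this
  simpa [Dp] using this

lemma Pp_eval (α : ℝ) (s : S) :
    (Pp Q r s).eval α = ∑ s', (α • (1 : Matrix S S ℝ) - Q).adjugate s s' * r s' := by
  have hadj := (Polynomial.evalRingHom α).map_adjugate (Mp Q)
  rw [Mp_eval] at hadj
  simp only [Pp, Polynomial.eval_finset_sum, Polynomial.eval_mul, Polynomial.eval_C]
  congr 1; funext s'
  have h2 : (α • (1 : Matrix S S ℝ) - Q).adjugate s s'
      = Polynomial.eval α ((Mp Q).adjugate s s') := by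
    rw [← hadj]; simp [RingHom.mapMatrix_apply, Matrix.map_apply]
  rw [h2]

lemma Pp_eval_val {α : ℝ} (hdet : (α • (1 : Matrix S S ℝ) - Q).det ≠ 0) (s : S) :
    (Pp Q r s).eval α
      = (α • (1 : Matrix S S ℝ) - Q).det * ((α • (1 : Matrix S S ℝ) - Q)⁻¹.mulVec r) s := by
  rw [Pp_eval]
  have hv : ((α • (1 : Matrix S S ℝ) - Q)⁻¹.mulVec r) s
      = ∑ s', ((α • (1 : Matrix S S ℝ) - Q).det)⁻¹ * ((α • (1 : Matrix S S ℝ) - Q).adjugate s s' * r s') := by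
    simp only [Matrix.mulVec, dotProduct, Matrix.inv_def, Ring.inverse_eq_inv', Matrix.smul_apply,
      smul_eq_mul]
    congr 1; funext s'; ring
  rw [hv, Finset.mul_sum]
  congr 1; funext s'
  field_simp

/-- Polynomial whose sign near `0⁺` encodes the optimality inequality at `(s,a2)`. -/
def Hp (c : S → ℝ) (rr : ℝ) (s : S) : ℝ[X] :=
  Dp Q * (Polynomial.X * Pp Q r s - (∑ s', Polynomial.C (c s') * Pp Q r s') - Polynomial.C rr * Dp Q)

lemma Hp_eval {α : ℝ} (hdet : (α • (1 : Matrix S S ℝ) - Q).det ≠ 0) (c : S → ℝ) (rr : ℝ) (s : S) :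
    (Hp Q r c rr s).eval α
      = ((α • (1 : Matrix S S ℝ) - Q).det)^2 *
        (α * ((α • (1 : Matrix S S ℝ) - Q)⁻¹.mulVec r) s
          - ∑ s', c s' * ((α • (1 : Matrix S S ℝ) - Q)⁻¹.mulVec r) s' - rr) := by
  set D := (α • (1 : Matrix S S ℝ) - Q).det with hD
  set v := (α • (1 : Matrix S S ℝ) - Q)⁻¹.mulVec r with hv
  simp only [Hp, Polynomial.eval_mul, Polynomial.eval_sub, Polynomial.eval_X,
    Polynomial.eval_finset_sum, Polynomial.eval_C, Dp_eval, Pp_eval_val Q r hdet, ← hD, ← hv]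
  rw [show ∑ x, c x * (D * v x) = D * ∑ s', c s' * v s' from by
    rw [Finset.mul_sum]; apply Finset.sum_congr rfl; intros; ring]
  ring

lemma Hp_nonneg_iff {α : ℝ} (hdet : (α • (1 : Matrix S S ℝ) - Q).det ≠ 0)
    (c : S → ℝ) (rr : ℝ) (s : S) :
    0 ≤ (Hp Q r c rr s).eval α ↔
      rr + ∑ s', c s' * ((α • (1 : Matrix S S ℝ) - Q)⁻¹.mulVec r) s'
        ≤ α * ((α • (1 : Matrix S S ℝ) - Q)⁻¹.mulVec r) s := by
  rw [Hp_eval Q r hdet]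
  have hD2 : 0 < ((α • (1 : Matrix S S ℝ) - Q).det)^2 := by positivity
  rw [mul_nonneg_iff_of_pos_left hD2]
  constructor <;> intro h <;> linarith

end Poly

end CTSCAR

/-- Every continuous-time single-controller additive-reward (SC-AR) stochastic
game possesses a stationary deterministic Blackwell–Nash equilibrium. -/
theorem ct_SCAR_exists_BNE
    {S : Type} [Fintype S] [DecidableEq S] [Nonempty S]
    {A1 A2 : S → Type}
    [∀ s, Fintype (A1 s)] [∀ s, DecidableEq (A1 s)] [∀ s, Nonempty (A1 s)]
    [∀ s, Fintype (A2 s)] [∀ s, DecidableEq (A2 s)] [∀ s, Nonempty (A2 s)]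
    (μ : ∀ s, A1 s → A2 s → S → ℝ) (r1 r2 : ∀ s, A1 s → A2 s → ℝ)
    (hμ0 : ∀ s a1 a2 s', s' ≠ s → 0 ≤ μ s a1 a2 s')
    (hμdiag : ∀ s a1 a2, μ s a1 a2 s = -∑ s' ∈ Finset.univ.erase s, μ s a1 a2 s')
    (hSC : ∀ s (a1 a1' : A1 s) (a2 : A2 s) (s' : S), μ s a1 a2 s' = μ s a1' a2 s')
    (hAR : ∃ (r11 : ∀ s, A1 s → ℝ) (r21 : ∀ s, A2 s → ℝ),
      ∀ s a1 a2, r1 s a1 a2 = r11 s a1 + r21 s a2) :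
    ∃ (asel1 : ∀ s, A1 s) (asel2 : ∀ s, A2 s) (α₀ : ℝ), 0 < α₀ ∧
      ∀ α ∈ Ioc 0 α₀, IsNashEqCT α μ r1 r2 (pureStrat asel1) (pureStrat asel2) := by
  classical
  obtain ⟨r11, r21, hAR⟩ := hAR
  -- player 1's argmax pure strategy
  have hsel1 : ∀ s : S, ∃ a : A1 s, ∀ a', r11 s a' ≤ r11 s a := by
    intro s
    obtain ⟨a, -, ha⟩ := Finset.exists_max_image Finset.univ (r11 s)
      ⟨Classical.arbitrary _, Finset.mem_univ _⟩
    exact ⟨a, fun a' => ha a' (Finset.mem_univ _)⟩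
  set asel1 : ∀ s, A1 s := fun s => (hsel1 s).choose with hasel1
  have hsel1max : ∀ s a', r11 s a' ≤ r11 s (asel1 s) := fun s => (hsel1 s).choose_spec
  set qb : ∀ s, A2 s → S → ℝ := fun s a2 s' => μ s (asel1 s) a2 s' with hqb
  set rb2 : ∀ s, A2 s → ℝ := fun s a2 => r2 s (asel1 s) a2 with hrb2
  have hq0 : ∀ s (a2 : A2 s) s', s' ≠ s → 0 ≤ qb s a2 s' := fun s a2 s' h => hμ0 s _ a2 s' h
  have hqsum : ∀ s (a2 : A2 s), ∑ s', qb s a2 s' = 0 := by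
    intro s a2
    rw [← Finset.add_sum_erase _ _ (Finset.mem_univ s)]
    have : qb s a2 s = -∑ s' ∈ Finset.univ.erase s, qb s a2 s' := hμdiag s (asel1 s) a2
    rw [this]; ring
  -- rate matrices do not depend on player 1's strategy
  have hrate : ∀ (f : ∀ s, A1 s → ℝ), (∀ s, ∑ a, f s a = 1) → ∀ (g : ∀ s, A2 s → ℝ),
      rateMat μ f g = CTSCAR.Qg qb g := by
    intro f hf g
    funext s s'
    show ∑ a1, ∑ a2, f s a1 * g s a2 * μ s a1 a2 s' = ∑ a2, g s a2 * qb s a2 s'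
    calc ∑ a1, ∑ a2, f s a1 * g s a2 * μ s a1 a2 s'
        = ∑ a1, f s a1 * ∑ a2, g s a2 * qb s a2 s' := by
          apply Finset.sum_congr rfl; intro a1 _
          rw [Finset.mul_sum]
          apply Finset.sum_congr rfl; intro a2 _
          rw [show μ s a1 a2 s' = qb s a2 s' from hSC s a1 (asel1 s) a2 s']
          ring
      _ = (∑ a1, f s a1) * (∑ a2, g s a2 * qb s a2 s') := by rw [Finset.sum_mul]
      _ = ∑ a2, g s a2 * qb s a2 s' := by rw [hf s]; ring
  -- additive rewards for player 1
  have hrew1 : ∀ (f : ∀ s, A1 s → ℝ), (∀ s, ∑ a, f s a = 1) →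
      ∀ (g : ∀ s, A2 s → ℝ), (∀ s, ∑ a, g s a = 1) → ∀ s,
      rewVec r1 f g s = (∑ a1, f s a1 * r11 s a1) + (∑ a2, g s a2 * r21 s a2) := by
    intro f hf g hg s
    show ∑ a1, ∑ a2, f s a1 * g s a2 * r1 s a1 a2 = _
    calc ∑ a1, ∑ a2, f s a1 * g s a2 * r1 s a1 a2
        = ∑ a1, ((f s a1 * r11 s a1) * ∑ a2, g s a2 + f s a1 * ∑ a2, g s a2 * r21 s a2) := by
          apply Finset.sum_congr rfl; intro a1 _
          rw [Finset.mul_sum, Finset.mul_sum, ← Finset.sum_add_distrib]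
          apply Finset.sum_congr rfl; intro a2 _
          rw [hAR s a1 a2]; ring
      _ = ∑ a1, (f s a1 * r11 s a1 + f s a1 * ∑ a2, g s a2 * r21 s a2) := by
          apply Finset.sum_congr rfl; intro a1 _
          rw [hg s]; ring
      _ = (∑ a1, f s a1 * r11 s a1) + (∑ a1, f s a1) * ∑ a2, g s a2 * r21 s a2 := by
          rw [Finset.sum_add_distrib, Finset.sum_mul]
      _ = _ := by rw [hf s]; ring
  -- player-2 reward vector
  have hrew2 : ∀ (g : ∀ s, A2 s → ℝ) s,
      rewVec r2 (pureStrat asel1) g s = ∑ a2, g s a2 * rb2 s a2 := by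
    intro g s
    show ∑ a1, ∑ a2, pureStrat asel1 s a1 * g s a2 * r2 s a1 a2 = _
    have : ∀ a1 : A1 s, ∑ a2, pureStrat asel1 s a1 * g s a2 * r2 s a1 a2
        = pureStrat asel1 s a1 * ∑ a2, g s a2 * r2 s a1 a2 := by
      intro a1; rw [Finset.mul_sum]; apply Finset.sum_congr rfl; intros; ring
    simp_rw [this]
    rw [CTSCAR.sum_pure asel1 s (fun a1 => ∑ a2, g s a2 * r2 s a1 a2)]
  -- per-discount maximizers
  have hbmax : ∀ n : ℕ, ∃ b : ∀ s, A2 s, ∀ b' : ∀ s, A2 s,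
      ∑ s, CTSCAR.vv qb rb2 (1/((n:ℝ)+1)) b' s ≤ ∑ s, CTSCAR.vv qb rb2 (1/((n:ℝ)+1)) b s := by
    intro n
    obtain ⟨b, -, hb⟩ := Finset.exists_max_image Finset.univ
      (fun b => ∑ s, CTSCAR.vv qb rb2 (1/((n:ℝ)+1)) b s) ⟨Classical.arbitrary _, Finset.mem_univ _⟩
    exact ⟨b, fun b' => hb b' (Finset.mem_univ _)⟩
  obtain ⟨bstar, hbstar⟩ := Finite.exists_infinite_fiber (fun n => (hbmax n).choose)
  have hinf : Set.Infinite ((fun n => (hbmax n).choose) ⁻¹' {bstar}) :=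
    Set.infinite_coe_iff.1 hbstar
  have hRstar : CTSCAR.RateMatrix (CTSCAR.Qg qb (pureStrat bstar)) :=
    CTSCAR.Qg_rate qb hq0 hqsum (CTSCAR.pure_isStrategy bstar)
  -- for every (s,a2), the optimality polynomial is eventually nonnegative near 0⁺
  have hHev : ∀ p : Σ s, A2 s, ∃ ε > (0:ℝ), ∀ x ∈ Ioc (0:ℝ) ε,
      0 ≤ (CTSCAR.Hp (CTSCAR.Qg qb (pureStrat bstar)) (fun s => rb2 s (bstar s))
        (fun s' => qb p.1 p.2 s') (rb2 p.1 p.2) p.1).eval x := by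
    intro p
    apply CTSCAR.poly_eventually_nonneg
    intro δ hδ
    obtain ⟨N, hN⟩ := exists_nat_gt (1/δ)
    obtain ⟨n, hn, hNn⟩ := hinf.exists_gt N
    have hα : (0:ℝ) < 1/((n:ℝ)+1) := by positivity
    have hle : 1/((n:ℝ)+1) ≤ δ := by
      have hNn' : (N:ℝ) < (n:ℝ) := by exact_mod_cast hNn
      rw [div_le_iff₀ (by positivity)]
      rw [div_lt_iff₀ hδ] at hN
      nlinarith
    refine ⟨1/((n:ℝ)+1), ⟨hα, hle⟩, ?_⟩
    have hb : (hbmax n).choose = bstar := hn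
    have hcond := CTSCAR.exists_opt qb rb2 hq0 hqsum hα ((hbmax n).choose_spec) p.1 p.2
    rw [hb] at hcond
    have hdet := CTSCAR.res_det_ne_zero hRstar hα
    rw [CTSCAR.Hp_nonneg_iff _ _ hdet]
    exact hcond
  choose εf hεfpos hεfprop using hHev
  have hNEp : Nonempty (Σ s, A2 s) := ⟨⟨Classical.arbitrary S, Classical.arbitrary _⟩⟩
  set α₀ : ℝ := Finset.univ.inf' (Finset.univ_nonempty) εf with hα₀
  have hα₀pos : 0 < α₀ := by
    rw [hα₀, Finset.lt_inf'_iff]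
    exact fun p _ => hεfpos p
  refine ⟨asel1, bstar, α₀, hα₀pos, ?_⟩
  rintro α ⟨hαpos, hαle⟩
  have hdet := CTSCAR.res_det_ne_zero hRstar hαpos
  -- the optimality inequalities hold at α
  have hCond : ∀ s (a2 : A2 s),
      rb2 s a2 + ∑ s', qb s a2 s' * CTSCAR.vv qb rb2 α bstar s'
        ≤ α * CTSCAR.vv qb rb2 α bstar s := by
    intro s a2
    have h1 := hεfprop ⟨s, a2⟩ α
      ⟨hαpos, le_trans hαle (Finset.inf'_le _ (Finset.mem_univ (⟨s, a2⟩ : Σ s, A2 s)))⟩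
    rw [CTSCAR.Hp_nonneg_iff _ _ hdet] at h1
    exact h1
  -- values
  have hctval2 : ∀ (g : ∀ s, A2 s → ℝ),
      ctVal α μ r2 (pureStrat asel1) g
        = (α • (1 : Matrix S S ℝ) - CTSCAR.Qg qb g)⁻¹.mulVec (rewVec r2 (pureStrat asel1) g) := by
    intro g
    rw [ctVal, hrate _ (CTSCAR.pure_isStrategy asel1).2]
  have hval2star : ctVal α μ r2 (pureStrat asel1) (pureStrat bstar) = CTSCAR.vv qb rb2 α bstar := by
    rw [hctval2]
    have : rewVec r2 (pureStrat asel1) (pureStrat bstar) = fun s => rb2 s (bstar s) := by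
      funext s
      rw [hrew2]
      exact CTSCAR.sum_pure bstar s (fun a2 => rb2 s a2)
    rw [this]
    rfl
  refine ⟨CTSCAR.pure_isStrategy asel1, CTSCAR.pure_isStrategy bstar, ?_, ?_⟩
  · -- player 1 cannot improve
    intro f' hf' s
    rw [ctVal, ctVal, hrate _ hf'.2, hrate _ (CTSCAR.pure_isStrategy asel1).2]
    apply CTSCAR.mulVec_mono (fun s j => CTSCAR.res_inv_nonneg hRstar hαpos s j)
    intro t
    rw [hrew1 _ hf'.2 _ (CTSCAR.pure_isStrategy bstar).2,
      hrew1 _ (CTSCAR.pure_isStrategy asel1).2 _ (CTSCAR.pure_isStrategy bstar).2]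
    have h2 : ∑ a1, pureStrat asel1 t a1 * r11 t a1 = r11 t (asel1 t) :=
      CTSCAR.sum_pure asel1 t (r11 t)
    rw [h2]
    have h3 : ∑ a1, f' t a1 * r11 t a1 ≤ r11 t (asel1 t) := by
      calc ∑ a1, f' t a1 * r11 t a1 ≤ ∑ a1, f' t a1 * r11 t (asel1 t) :=
            Finset.sum_le_sum (fun a1 _ => mul_le_mul_of_nonneg_left (hsel1max t a1) (hf'.1 t a1))
        _ = r11 t (asel1 t) := by rw [← Finset.sum_mul, hf'.2 t, one_mul]
    linarith
  · -- player 2 cannot improve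
    intro g' hg' s
    rw [hval2star, hctval2]
    have hRg' : CTSCAR.RateMatrix (CTSCAR.Qg qb g') := CTSCAR.Qg_rate qb hq0 hqsum hg'
    apply CTSCAR.value_le hRg' hαpos
    intro t
    rw [hrew2, CTSCAR.Qg_mulVec]
    have : ∑ a2, g' t a2 * rb2 t a2
          + ∑ a2, g' t a2 * ∑ s', qb t a2 s' * CTSCAR.vv qb rb2 α bstar s'
        = ∑ a2, g' t a2 * (rb2 t a2 + ∑ s', qb t a2 s' * CTSCAR.vv qb rb2 α bstar s') := by
      rw [← Finset.sum_add_distrib]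
      apply Finset.sum_congr rfl; intros; ring
    rw [this]
    calc ∑ a2, g' t a2 * (rb2 t a2 + ∑ s', qb t a2 s' * CTSCAR.vv qb rb2 α bstar s')
        ≤ ∑ a2, g' t a2 * (α * CTSCAR.vv qb rb2 α bstar t) :=
          Finset.sum_le_sum (fun a2 _ => mul_le_mul_of_nonneg_left (hCond t a2) (hg'.1 t a2))
      _ = α * CTSCAR.vv qb rb2 α bstar t := by rw [← Finset.sum_mul, hg'.2 t, one_mul]

end
end

section
/- (Sufficient conditions M1–M3 for a Blackwell–Nash equilibrium in continuous time.) Assume ‖μ‖ := max over all (s,a¹,a²) of Σ_{s′≠s} μ(s′,s,a¹,a²) is strictly positive. Let (f*,g*) be the pure stationary strategy pair given by action selections a¹_s ∈ A¹(s), a²_s ∈ A²(s). Suppose: (M1) (f*,g*) is an α̂-Nash equilibrium for some α̂ > 0; (M2) there is a probability vector (w_{s′})_{s′∈S} such that Q(f*,g*)(s,s′) = ‖μ‖·(w_{s′} − δ_{ss′}) for all s, s′ ∈ S, where δ is the Kronecker delta; (M3) for all s ∈ S and a¹ ∈ A¹(s): Σ_{s′} w_{s′} r¹(s′, a¹_{s′},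 a²_{s′}) ≥ Σ_{s′} (μ(s′,s,a¹,a²_s)/‖μ‖ + δ_{ss′}) r¹(s′, a¹_{s′}, a²_{s′}), and for all s ∈ S and a² ∈ A²(s): Σ_{s′} w_{s′} r²(s′, a¹_{s′}, a²_{s′}) ≥ Σ_{s′} (μ(s′,s,a¹_s,a²)/‖μ‖ + δ_{ss′}) r²(s′, a¹_{s′}, a²_{s′}). Then there exists α₀ > 0 such that (f*,g*) is an α-Nash equilibrium for every α ∈ (0, α₀], i.e., (f*,g*) is a Blackwell–Nash equilibrium. -/
set_option linter.unusedSectionVars false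
set_option maxHeartbeats 1000000


open Matrix Set BigOperators

noncomputable section

def stratQ {S : Type} [Fintype S] {B : S → Type} [∀ s, Fintype (B s)]
    (q : ∀ s, B s → S → ℝ) (f : ∀ s, B s → ℝ) : Matrix S S ℝ :=
  fun s s' => ∑ b, f s b * q s b s'

def stratR {S : Type} [Fintype S] {B : S → Type} [∀ s, Fintype (B s)]
    (ρ : ∀ s, B s → ℝ) (f : ∀ s, B s → ℝ) : S → ℝ :=
  fun s => ∑ b, f s b * ρ s b

variable {S : Type} [Fintype S] [DecidableEq S] [Nonempty S]

lemma mulVec_entry (Q : Matrix S S ℝ) (α : ℝ) (x : S → ℝ) (s : S) :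
    (α • (1 : Matrix S S ℝ) - Q).mulVec x s = α * x s - ∑ s', Q s s' * x s' := by
  simp [Matrix.mulVec, dotProduct, Matrix.sub_apply, Matrix.smul_apply, Matrix.one_apply,
    sub_mul, ite_mul, Finset.sum_sub_distrib, mul_assoc]

lemma mono_aux (Q : Matrix S S ℝ) (hoff : ∀ s s', s' ≠ s → 0 ≤ Q s s')
    (hrow : ∀ s, ∑ s', Q s s' = 0) {α : ℝ} (hα : 0 < α)
    (x : S → ℝ) (hx : ∀ s, 0 ≤ (α • (1 : Matrix S S ℝ) - Q).mulVec x s) :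
    ∀ s, 0 ≤ x s := by
  obtain ⟨s0, -, hs0⟩ := Finset.exists_min_image Finset.univ x
    ⟨Classical.arbitrary S, Finset.mem_univ _⟩
  have hs0' : ∀ s, x s0 ≤ x s := fun s => hs0 s (Finset.mem_univ s)
  have key := hx s0
  rw [mulVec_entry] at key
  have h1 : ∑ s', Q s0 s' * x s' = ∑ s', Q s0 s' * (x s' - x s0) := by
    simp [mul_sub, Finset.sum_sub_distrib, ← Finset.sum_mul, hrow s0]
  have h2 : 0 ≤ ∑ s', Q s0 s' * (x s' - x s0) := by
    apply Finset.sum_nonneg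
    intro s' _
    rcases eq_or_ne s' s0 with h | h
    · simp [h]
    · exact mul_nonneg (hoff s0 s' h) (by linarith [hs0' s'])
  have : 0 ≤ x s0 := by nlinarith
  intro s; linarith [hs0' s]

lemma isUnit_aux (Q : Matrix S S ℝ) (hoff : ∀ s s', s' ≠ s → 0 ≤ Q s s')
    (hrow : ∀ s, ∑ s', Q s s' = 0) {α : ℝ} (hα : 0 < α) :
    IsUnit (α • (1 : Matrix S S ℝ) - Q) := by
  rw [← Matrix.mulVec_injective_iff_isUnit]
  have : Function.Injective (Matrix.mulVecLin (α • (1 : Matrix S S ℝ) - Q)) := by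
    rw [← LinearMap.ker_eq_bot, LinearMap.ker_eq_bot']
    intro x hx
    have h0 : (α • (1 : Matrix S S ℝ) - Q).mulVec x = 0 := hx
    have h1 : ∀ s, 0 ≤ x s := mono_aux Q hoff hrow hα x (by simp [h0])
    have h2 : ∀ s, 0 ≤ (-x) s := mono_aux Q hoff hrow hα (-x) (by simp [Matrix.mulVec_neg, h0])
    funext s
    have h2s := h2 s
    simp only [Pi.neg_apply] at h2s
    simp; linarith [h1 s]
  exact this

lemma single_nonneg_aux (Q : Matrix S S ℝ) (hoff : ∀ s s', s' ≠ s → 0 ≤ Q s s')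
    (hrow : ∀ s, ∑ s', Q s s' = 0) {α : ℝ} (hα : 0 < α)
    (y : S → ℝ) (hy : ∀ s, 0 ≤ y s) (s0 : S) (e : ℝ)
    (h : (α • (1 : Matrix S S ℝ) - Q).mulVec y = Pi.single s0 e) : 0 ≤ e := by
  by_contra he
  push_neg at he
  have h2 : ∀ s, 0 ≤ (-y) s := by
    apply mono_aux Q hoff hrow hα
    intro s
    rw [Matrix.mulVec_neg, h]
    rcases eq_or_ne s s0 with rfl | hs
    · simp; linarith
    · simp [Pi.single_eq_of_ne hs]
  have hy0 : y = 0 := by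
    funext s; have h2s := h2 s; simp only [Pi.neg_apply] at h2s
    simp only [Pi.zero_apply]; linarith [hy s]
  rw [hy0] at h
  have := congrFun h s0
  simp at this
  linarith

lemma inv_mulVec_eq {M : Matrix S S ℝ} (h : IsUnit M) {v r : S → ℝ}
    (hv : M.mulVec v = r) : M⁻¹.mulVec r = v := by
  rw [← hv, Matrix.mulVec_mulVec,
    Matrix.nonsing_inv_mul M ((Matrix.isUnit_iff_isUnit_det M).mp h), Matrix.one_mulVec]

lemma mulVec_inv_mulVec {M : Matrix S S ℝ} (h : IsUnit M) (r : S → ℝ) :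
    M.mulVec (M⁻¹.mulVec r) = r := by
  rw [Matrix.mulVec_mulVec,
    Matrix.mul_nonsing_inv M ((Matrix.isUnit_iff_isUnit_det M).mp h), Matrix.one_mulVec]

lemma mdp_blackwell {B : S → Type} [∀ s, Fintype (B s)] [∀ s, DecidableEq (B s)]
    (q : ∀ s, B s → S → ℝ) (ρ : ∀ s, B s → ℝ)
    (hq0 : ∀ s b s', s' ≠ s → 0 ≤ q s b s')
    (hqsum : ∀ s b, ∑ s', q s b s' = 0)
    (m : ℝ) (hm : 0 < m) (bstar : ∀ s, B s)
    (w : S → ℝ) (hw1 : ∑ s', w s' = 1)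
    (hM2 : ∀ s s', q s (bstar s) s' = m * (w s' - if s = s' then 1 else 0))
    (hM3 : ∀ s b, (∑ s', q s b s' * ρ s' (bstar s'))
        ≤ m * ((∑ s', w s' * ρ s' (bstar s')) - ρ s (bstar s)))
    (αhat : ℝ) (hαhat : 0 < αhat)
    (hM1 : ∀ f, IsStrategy f → ∀ s,
      (((αhat • (1 : Matrix S S ℝ) - stratQ q f)⁻¹).mulVec (stratR ρ f)) s
      ≤ (((αhat • (1 : Matrix S S ℝ) - stratQ q (pureStrat bstar))⁻¹).mulVec (stratR ρ (pureStrat bstar))) s) :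
    ∀ α, α ∈ Ioc (0:ℝ) αhat → ∀ f, IsStrategy f → ∀ s,
      (((α • (1 : Matrix S S ℝ) - stratQ q f)⁻¹).mulVec (stratR ρ f)) s
      ≤ (((α • (1 : Matrix S S ℝ) - stratQ q (pureStrat bstar))⁻¹).mulVec (stratR ρ (pureStrat bstar))) s := by
  classical
  set rstar : S → ℝ := fun s => ρ s (bstar s) with hrstar
  set rbar : ℝ := ∑ s', w s' * rstar s' with hrbar
  have hoffQ : ∀ (f : ∀ s, B s → ℝ), IsStrategy f → ∀ s s', s' ≠ s →
      0 ≤ stratQ q f s s' := fun f hf s s' h =>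
    Finset.sum_nonneg fun b _ => mul_nonneg (hf.1 s b) (hq0 s b s' h)
  have hrowQ : ∀ (f : ∀ s, B s → ℝ), ∀ s, ∑ s', stratQ q f s s' = 0 := by
    intro f s
    simp only [stratQ]
    rw [Finset.sum_comm]
    simp [← Finset.mul_sum, hqsum]
  have pure_isStrat : IsStrategy (pureStrat bstar) :=
    ⟨fun s a => by by_cases h : a = bstar s <;> simp [pureStrat, h],
     fun s => by simp [pureStrat]⟩
  have pureQ : ∀ s s', stratQ q (pureStrat bstar) s s' = q s (bstar s) s' := by
    intro s s'; simp [stratQ, pureStrat, ite_mul]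
  have purer : ∀ s, stratR ρ (pureStrat bstar) s = rstar s := by
    intro s; simp [stratR, pureStrat, ite_mul, hrstar]
  set vst : ℝ → S → ℝ := fun α s => (rstar s + m * rbar / α) / (α + m) with hvst
  -- key expression
  have key_expr : ∀ (α : ℝ), 0 < α → ∀ s0 (b : B s0),
      α * vst α s0 - ∑ s', q s0 b s' * vst α s'
        = (α * rstar s0 + m * rbar - ∑ s', q s0 b s' * rstar s') / (α + m) := by
    intro α hα s0 b
    have h1 : α ≠ 0 := ne_of_gt hα
    have h2 : α + m ≠ 0 := by positivity
    have e1 : ∑ s', q s0 b s' * vst α s'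
        = ((∑ s', q s0 b s' * rstar s') + (∑ s', q s0 b s') * (m * rbar / α)) / (α + m) := by
      rw [Finset.sum_mul, ← Finset.sum_add_distrib, Finset.sum_div]
      apply Finset.sum_congr rfl
      intro s' _
      simp only [hvst]
      field_simp
    rw [e1, hqsum]
    simp only [hvst]
    field_simp
    ring
  -- Mstar * vst = rstar
  have Mstar_vst : ∀ (α : ℝ), 0 < α →
      (α • (1 : Matrix S S ℝ) - stratQ q (pureStrat bstar)).mulVec (vst α) = rstar := by
    intro α hα
    funext s
    rw [mulVec_entry]
    have e1 : ∑ s', stratQ q (pureStrat bstar) s s' * vst α s'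
        = ∑ s', q s (bstar s) s' * vst α s' := by
      apply Finset.sum_congr rfl; intro s' _; rw [pureQ]
    rw [e1, key_expr α hα s (bstar s)]
    have e2 : ∑ s', q s (bstar s) s' * rstar s' = m * rbar - m * rstar s := by
      have : ∀ s' : S, q s (bstar s) s' * rstar s'
          = m * (w s' * rstar s') - m * ((if s = s' then 1 else 0) * rstar s') := by
        intro s'; rw [hM2]; ring
      simp only [this]
      rw [Finset.sum_sub_distrib, ← Finset.mul_sum, ← Finset.mul_sum, ← hrbar]
      congr 1
      rw [Finset.mul_sum]
      simp [ite_mul, Finset.sum_ite_eq]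
    rw [e2]
    have h2 : α + m ≠ 0 := by positivity
    have h1 : α ≠ 0 := ne_of_gt hα
    rw [div_eq_iff h2]
    ring
  have val_pure : ∀ (α : ℝ), 0 < α →
      (((α • (1 : Matrix S S ℝ) - stratQ q (pureStrat bstar))⁻¹).mulVec
        (stratR ρ (pureStrat bstar))) = vst α := by
    intro α hα
    have hU := isUnit_aux (stratQ q (pureStrat bstar))
      (hoffQ _ pure_isStrat) (hrowQ _) hα
    have h := inv_mulVec_eq hU (Mstar_vst α hα)
    rw [show stratR ρ (pureStrat bstar) = rstar from funext purer]
    exact h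
  -- step A : one-step inequalities at αhat
  have stepA : ∀ s0 (b : B s0),
      ρ s0 b ≤ (αhat * rstar s0 + m * rbar - ∑ s', q s0 b s' * rstar s') / (αhat + m) := by
    intro s0 b
    set f' : ∀ s, B s → ℝ :=
      Function.update (pureStrat bstar) s0 (fun c => if c = b then 1 else 0) with hf'
    have hf'strat : IsStrategy f' := by
      constructor
      · intro s a
        rcases eq_or_ne s s0 with rfl | h
        · simp only [hf', Function.update_self]
          split <;> norm_num
        · simp only [hf', Function.update_of_ne h]
          exact pure_isStrat.1 s a
      · intro s
        rcases eq_or_ne s s0 with rfl | h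
        · simp [hf', Function.update_self]
        · simp only [hf', Function.update_of_ne h]
          exact pure_isStrat.2 s
    have hQ'0 : ∀ s', stratQ q f' s0 s' = q s0 b s' := by
      intro s'; simp [stratQ, hf', Function.update_self, ite_mul]
    have hQ'ne : ∀ s, s ≠ s0 → ∀ s', stratQ q f' s s' = q s (bstar s) s' := by
      intro s h s'; simp [stratQ, hf', Function.update_of_ne h, pureStrat, ite_mul]
    have hr'0 : stratR ρ f' s0 = ρ s0 b := by
      simp [stratR, hf', Function.update_self, ite_mul]
    have hr'ne : ∀ s, s ≠ s0 → stratR ρ f' s = rstar s := by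
      intro s h; simp [stratR, hf', Function.update_of_ne h, pureStrat, ite_mul, hrstar]
    set Q' : Matrix S S ℝ := stratQ q f' with hQ'
    have hU' : IsUnit (αhat • (1 : Matrix S S ℝ) - Q') :=
      isUnit_aux Q' (hoffQ _ hf'strat) (hrowQ _) hαhat
    set v' : S → ℝ := ((αhat • (1 : Matrix S S ℝ) - Q')⁻¹).mulVec (stratR ρ f') with hv'
    have hMv' : (αhat • (1 : Matrix S S ℝ) - Q').mulVec v' = stratR ρ f' :=
      mulVec_inv_mulVec hU' _
    set y : S → ℝ := fun s => vst αhat s - v' s with hy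
    have hynn : ∀ s, 0 ≤ y s := by
      intro s
      have := hM1 f' hf'strat s
      rw [val_pure αhat hαhat] at this
      simp only [hy, hv']
      linarith [this]
    set e : ℝ := αhat * vst αhat s0 - (∑ s', q s0 b s' * vst αhat s') - ρ s0 b with he
    have hMy : (αhat • (1 : Matrix S S ℝ) - Q').mulVec y = Pi.single s0 e := by
      funext s
      have expand : (αhat • (1 : Matrix S S ℝ) - Q').mulVec y s
          = (αhat • (1 : Matrix S S ℝ) - Q').mulVec (vst αhat) s
            - (αhat • (1 : Matrix S S ℝ) - Q').mulVec v' s := by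
        simp only [hy]
        rw [show (fun s => vst αhat s - v' s) = vst αhat - v' from rfl,
          Matrix.mulVec_sub]
        simp
      rw [expand, hMv']
      rcases eq_or_ne s s0 with rfl | hs
      · rw [mulVec_entry]
        have : ∑ s', Q' s s' * vst αhat s' = ∑ s', q s b s' * vst αhat s' := by
          apply Finset.sum_congr rfl; intro s' _; rw [hQ'0]
        rw [this, hr'0, Pi.single_eq_same, he]
      · rw [mulVec_entry]
        have e1 : ∑ s', Q' s s' * vst αhat s' = ∑ s', q s (bstar s) s' * vst αhat s' := by
          apply Finset.sum_congr rfl; intro s' _; rw [hQ'ne s hs]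
        have e2 := congrFun (Mstar_vst αhat hαhat) s
        rw [mulVec_entry] at e2
        have e3 : ∑ s', stratQ q (pureStrat bstar) s s' * vst αhat s'
            = ∑ s', q s (bstar s) s' * vst αhat s' := by
          apply Finset.sum_congr rfl; intro s' _; rw [pureQ]
        rw [e3] at e2
        rw [e1, hr'ne s hs, Pi.single_eq_of_ne hs, e2]
        ring
    have hepos : 0 ≤ e :=
      single_nonneg_aux Q' (hoffQ _ hf'strat) (hrowQ _) hαhat y hynn s0 e hMy
    rw [he, key_expr αhat hαhat s0 b] at hepos
    linarith
  -- step α : one-step inequalities for all α in (0, αhat]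
  intro α hαIoc f hf s
  obtain ⟨hα0, hαle⟩ := hαIoc
  have stepα : ∀ s0 (b : B s0),
      ρ s0 b ≤ (α * rstar s0 + m * rbar - ∑ s', q s0 b s' * rstar s') / (α + m) := by
    intro s0 b
    have hA := stepA s0 b
    have hB : ∑ s', q s0 b s' * rstar s' ≤ m * (rbar - rstar s0) := hM3 s0 b
    rw [le_div_iff₀ (by positivity)] at hA ⊢
    nlinarith [mul_le_mul_of_nonneg_left hA (le_of_lt (show (0:ℝ) < α + m by positivity)),
      mul_le_mul_of_nonneg_left hB (sub_nonneg.mpr hαle),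
      show (0:ℝ) < αhat + m by positivity]
  -- conclude
  set Qf : Matrix S S ℝ := stratQ q f with hQf
  have hUf : IsUnit (α • (1 : Matrix S S ℝ) - Qf) :=
    isUnit_aux Qf (hoffQ _ hf) (hrowQ _) hα0
  set vf : S → ℝ := ((α • (1 : Matrix S S ℝ) - Qf)⁻¹).mulVec (stratR ρ f) with hvf
  have hMvf : (α • (1 : Matrix S S ℝ) - Qf).mulVec vf = stratR ρ f :=
    mulVec_inv_mulVec hUf _
  have hynn : ∀ s, 0 ≤ vst α s - vf s := by
    apply mono_aux Qf (hoffQ _ hf) (hrowQ _) hα0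
    intro t
    have expand : (α • (1 : Matrix S S ℝ) - Qf).mulVec (fun u => vst α u - vf u) t
        = (α • (1 : Matrix S S ℝ) - Qf).mulVec (vst α) t
          - (α • (1 : Matrix S S ℝ) - Qf).mulVec vf t := by
      rw [show (fun u => vst α u - vf u) = vst α - vf from rfl, Matrix.mulVec_sub]
      simp
    rw [expand, hMvf, mulVec_entry]
    simp only [stratR]
    have e1 : ∑ s', Qf t s' * vst α s' = ∑ b, f t b * (∑ s', q t b s' * vst α s') := by
      rw [hQf]
      simp only [stratQ]
      simp only [Finset.sum_mul]
      rw [Finset.sum_comm]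
      apply Finset.sum_congr rfl; intro b _
      rw [Finset.mul_sum]
      apply Finset.sum_congr rfl; intro s' _
      ring
    rw [e1]
    have e2 : α * vst α t = ∑ b, f t b * (α * vst α t) := by
      rw [← Finset.sum_mul, hf.2 t, one_mul]
    rw [e2, ← Finset.sum_sub_distrib, ← Finset.sum_sub_distrib]
    apply Finset.sum_nonneg
    intro b _
    have h1 : ρ t b ≤ α * vst α t - ∑ s', q t b s' * vst α s' := by
      rw [key_expr α hα0 t b]
      exact stepα t b
    nlinarith [hf.1 t b, h1]
  have := hynn s
  rw [val_pure α hα0]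
  simp only [hvf] at this ⊢
  linarith

lemma pureStrat_isStrategy {S : Type} [Fintype S] {A : S → Type}
    [∀ s, Fintype (A s)] [∀ s, DecidableEq (A s)] (a : ∀ s, A s) :
    IsStrategy (pureStrat a) :=
  ⟨fun s b => by by_cases h : b = a s <;> simp [pureStrat, h],
   fun s => by simp [pureStrat]⟩

/-- Conditions M1–M3 are sufficient for a pure stationary Nash equilibrium of a
finite continuous-time discounted stochastic game to be a Blackwell–Nash
equilibrium. Here `μnorm` is the (strictly positive) maximum of the total
transition rates `∑_{s' ≠ s} μ(s',s,a¹,a²)`. -/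
theorem ct_blackwell_nash_of_M1_M2_M3
    {S : Type} [Fintype S] [DecidableEq S] [Nonempty S]
    {A1 A2 : S → Type}
    [∀ s, Fintype (A1 s)] [∀ s, DecidableEq (A1 s)] [∀ s, Nonempty (A1 s)]
    [∀ s, Fintype (A2 s)] [∀ s, DecidableEq (A2 s)] [∀ s, Nonempty (A2 s)]
    (μ : ∀ s, A1 s → A2 s → S → ℝ) (r1 r2 : ∀ s, A1 s → A2 s → ℝ)
    (hμ0 : ∀ s a1 a2 s', s' ≠ s → 0 ≤ μ s a1 a2 s')
    (hμdiag : ∀ s a1 a2, μ s a1 a2 s = -∑ s' ∈ Finset.univ.erase s, μ s a1 a2 s')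
    (μnorm : ℝ) (hμnorm_pos : 0 < μnorm)
    (hμnorm_ub : ∀ s a1 a2, ∑ s' ∈ Finset.univ.erase s, μ s a1 a2 s' ≤ μnorm)
    (hμnorm_mem : ∃ s, ∃ a1 : A1 s, ∃ a2 : A2 s,
      ∑ s' ∈ Finset.univ.erase s, μ s a1 a2 s' = μnorm)
    (asel1 : ∀ s, A1 s) (asel2 : ∀ s, A2 s)
    (αhat : ℝ) (hαhat : 0 < αhat)
    (hM1 : IsNashEqCT αhat μ r1 r2 (pureStrat asel1) (pureStrat asel2))
    (w : S → ℝ) (hw0 : ∀ s', 0 ≤ w s') (hw1 : ∑ s', w s' = 1)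
    (hM2 : ∀ s s', rateMat μ (pureStrat asel1) (pureStrat asel2) s s'
      = μnorm * (w s' - if s = s' then 1 else 0))
    (hM3a : ∀ s (b : A1 s),
      ∑ s', (μ s b (asel2 s) s' / μnorm + if s = s' then 1 else 0)
          * r1 s' (asel1 s') (asel2 s')
        ≤ ∑ s', w s' * r1 s' (asel1 s') (asel2 s'))
    (hM3b : ∀ s (b : A2 s),
      ∑ s', (μ s (asel1 s) b s' / μnorm + if s = s' then 1 else 0)
          * r2 s' (asel1 s') (asel2 s')
        ≤ ∑ s', w s' * r2 s' (asel1 s') (asel2 s')) :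
    ∃ α₀ : ℝ, 0 < α₀ ∧ ∀ α ∈ Ioc 0 α₀,
      IsNashEqCT α μ r1 r2 (pureStrat asel1) (pureStrat asel2) := by

  classical
  -- player 1 data
  set q1 : ∀ s, A1 s → S → ℝ := fun s b s' => μ s b (asel2 s) s' with hq1
  set ρ1 : ∀ s, A1 s → ℝ := fun s b => r1 s b (asel2 s) with hρ1
  -- player 2 data
  set q2 : ∀ s, A2 s → S → ℝ := fun s b s' => μ s (asel1 s) b s' with hq2
  set ρ2 : ∀ s, A2 s → ℝ := fun s b => r2 s (asel1 s) b with hρ2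
  have hqsum : ∀ s (a1 : A1 s) (a2 : A2 s), ∑ s', μ s a1 a2 s' = 0 := by
    intro s a1 a2
    rw [← Finset.add_sum_erase _ _ (Finset.mem_univ s), hμdiag s a1 a2]
    ring
  -- rateMat/rewVec conversions
  have hQ1 : ∀ f : ∀ s, A1 s → ℝ, rateMat μ f (pureStrat asel2) = stratQ q1 f := by
    intro f
    funext s s'
    simp [rateMat, stratQ, pureStrat, mul_ite, ite_mul, hq1]
  have hR1 : ∀ f : ∀ s, A1 s → ℝ, rewVec r1 f (pureStrat asel2) = stratR ρ1 f := by
    intro f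
    funext s
    simp [rewVec, stratR, pureStrat, mul_ite, ite_mul, hρ1]
  have hQ2 : ∀ g : ∀ s, A2 s → ℝ, rateMat μ (pureStrat asel1) g = stratQ q2 g := by
    intro g
    funext s s'
    simp [rateMat, stratQ, pureStrat, mul_ite, ite_mul, hq2]
  have hR2 : ∀ g : ∀ s, A2 s → ℝ, rewVec r2 (pureStrat asel1) g = stratR ρ2 g := by
    intro g
    funext s
    simp [rewVec, stratR, pureStrat, mul_ite, ite_mul, hρ2]
  have hpure1 : pureStrat asel1 = pureStrat asel1 := rfl
  have hval1 : ∀ (α : ℝ) (f : ∀ s, A1 s → ℝ),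
      ctVal α μ r1 f (pureStrat asel2)
        = ((α • (1 : Matrix S S ℝ) - stratQ q1 f)⁻¹).mulVec (stratR ρ1 f) := by
    intro α f
    rw [ctVal, hQ1, hR1]
  have hval2 : ∀ (α : ℝ) (g : ∀ s, A2 s → ℝ),
      ctVal α μ r2 (pureStrat asel1) g
        = ((α • (1 : Matrix S S ℝ) - stratQ q2 g)⁻¹).mulVec (stratR ρ2 g) := by
    intro α g
    rw [ctVal, hQ2, hR2]
  -- M2 in per-player form
  have hM2' : ∀ s s', μ s (asel1 s) (asel2 s) s' = μnorm * (w s' - if s = s' then 1 else 0) := by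
    intro s s'
    have := hM2 s s'
    rw [show rateMat μ (pureStrat asel1) (pureStrat asel2) s s'
        = μ s (asel1 s) (asel2 s) s' by
      simp [rateMat, pureStrat, mul_ite, ite_mul]] at this
    exact this
  -- M3 in per-player form
  have hM3a' : ∀ s (b : A1 s), (∑ s', q1 s b s' * ρ1 s' (asel1 s'))
      ≤ μnorm * ((∑ s', w s' * ρ1 s' (asel1 s')) - ρ1 s (asel1 s)) := by
    intro s b
    have h := hM3a s b
    have hrw : ∑ s', (μ s b (asel2 s) s' / μnorm + if s = s' then 1 else 0)
          * r1 s' (asel1 s') (asel2 s')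
        = (∑ s', μ s b (asel2 s) s' * r1 s' (asel1 s') (asel2 s')) / μnorm
          + r1 s (asel1 s) (asel2 s) := by
      have e : ∀ s' : S, (μ s b (asel2 s) s' / μnorm + if s = s' then 1 else 0)
            * r1 s' (asel1 s') (asel2 s')
          = μ s b (asel2 s) s' * r1 s' (asel1 s') (asel2 s') / μnorm
            + (if s = s' then 1 else 0) * r1 s' (asel1 s') (asel2 s') := by
        intro s'; ring
      rw [Finset.sum_congr rfl fun s' _ => e s', Finset.sum_add_distrib, ← Finset.sum_div]
      congr 1
      simp [ite_mul, Finset.sum_ite_eq]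
    rw [hrw] at h
    have hmain : (∑ s', μ s b (asel2 s) s' * r1 s' (asel1 s') (asel2 s')) / μnorm
        ≤ (∑ s', w s' * r1 s' (asel1 s') (asel2 s')) - r1 s (asel1 s) (asel2 s) := by
      linarith
    rw [div_le_iff₀ hμnorm_pos] at hmain
    simp only [hq1, hρ1]
    nlinarith [hmain]
  have hM3b' : ∀ s (b : A2 s), (∑ s', q2 s b s' * ρ2 s' (asel2 s'))
      ≤ μnorm * ((∑ s', w s' * ρ2 s' (asel2 s')) - ρ2 s (asel2 s)) := by
    intro s b
    have h := hM3b s b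
    have hrw : ∑ s', (μ s (asel1 s) b s' / μnorm + if s = s' then 1 else 0)
          * r2 s' (asel1 s') (asel2 s')
        = (∑ s', μ s (asel1 s) b s' * r2 s' (asel1 s') (asel2 s')) / μnorm
          + r2 s (asel1 s) (asel2 s) := by
      have e : ∀ s' : S, (μ s (asel1 s) b s' / μnorm + if s = s' then 1 else 0)
            * r2 s' (asel1 s') (asel2 s')
          = μ s (asel1 s) b s' * r2 s' (asel1 s') (asel2 s') / μnorm
            + (if s = s' then 1 else 0) * r2 s' (asel1 s') (asel2 s') := by
        intro s'; ring
      rw [Finset.sum_congr rfl fun s' _ => e s', Finset.sum_add_distrib, ← Finset.sum_div]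
      congr 1
      simp [ite_mul, Finset.sum_ite_eq]
    rw [hrw] at h
    have hmain : (∑ s', μ s (asel1 s) b s' * r2 s' (asel1 s') (asel2 s')) / μnorm
        ≤ (∑ s', w s' * r2 s' (asel1 s') (asel2 s')) - r2 s (asel1 s) (asel2 s) := by
      linarith
    rw [div_le_iff₀ hμnorm_pos] at hmain
    simp only [hq2, hρ2]
    nlinarith [hmain]
  obtain ⟨-, -, hN1, hN2⟩ := hM1
  -- helper applied to player 1
  have key1 := mdp_blackwell q1 ρ1
    (fun s b s' h => hμ0 s b (asel2 s) s' h)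
    (fun s b => hqsum s b (asel2 s))
    μnorm hμnorm_pos asel1 w hw1
    (fun s s' => hM2' s s')
    hM3a' αhat hαhat
    (fun f hf s => by
      have := hN1 f hf s
      rwa [hval1 αhat f, hval1 αhat (pureStrat asel1)] at this)
  -- helper applied to player 2
  have key2 := mdp_blackwell q2 ρ2
    (fun s b s' h => hμ0 s (asel1 s) b s' h)
    (fun s b => hqsum s (asel1 s) b)
    μnorm hμnorm_pos asel2 w hw1
    (fun s s' => hM2' s s')
    hM3b' αhat hαhat
    (fun g hg s => by
      have := hN2 g hg s
      rwa [hval2 αhat g, hval2 αhat (pureStrat asel2)] at this)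
  refine ⟨αhat, hαhat, fun α hα => ?_⟩
  refine ⟨pureStrat_isStrategy asel1, pureStrat_isStrategy asel2, ?_, ?_⟩
  · intro f' hf' s
    have := key1 α hα f' hf' s
    rwa [← hval1 α f', ← hval1 α (pureStrat asel1)] at this
  · intro g' hg' s
    have := key2 α hα g' hg' s
    rwa [← hval2 α g', ← hval2 α (pureStrat asel2)] at this

end
end

section
/- (Sufficient conditions N1–N3 for a Blackwell–Nash equilibrium in continuous time.) Assume ‖μ‖ := max over all (s,a¹,a²) of Σ_{s′≠s} μ(s′,s,a¹,a²) is strictly positive. Let (f*,g*) be the pure stationary strategy pair given by action selections a¹_s ∈ A¹(s), a²_s ∈ A²(s). Suppose: (N1) (f*,g*) is an α̂-Nash equilibrium for some α̂ > 0; (N2) Q(f*,g*) is the zero matrix (all states are absorbing under (f*,g*)); (N3) for all s ∈ S and a¹ ∈ A¹(s): r¹(s, a¹, a²_s) ≥ Σ_{s′} (μ(s′,s,a¹,a²_s)/‖μ‖ + δ_{ss′}) r¹(s′, a¹_{s′}, a²_{s′}), and for all s ∈ S and a² ∈ A²(s): r²(s, a¹_s, a²) ≥ Σ_{s′} (μ(s′,s,a¹_s,a²)/‖μ‖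 + δ_{ss′}) r²(s′, a¹_{s′}, a²_{s′}), where δ is the Kronecker delta. Then there exists α₀ > 0 such that (f*,g*) is an α-Nash equilibrium for every α ∈ (0, α₀], i.e., (f*,g*) is a Blackwell–Nash equilibrium. -/
open Matrix Set BigOperators

noncomputable section

section Helper

variable {S : Type} [Fintype S] [DecidableEq S]

lemma isStrategy_pureStrat {A : S → Type} [∀ s, Fintype (A s)] [∀ s, DecidableEq (A s)]
    (a : ∀ s, A s) : IsStrategy (pureStrat a) := by
  constructor
  · intro s b; unfold pureStrat; split <;> norm_num
  · intro s; simp [pureStrat]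

lemma sum_pureStrat {A : S → Type} [∀ s, Fintype (A s)] [∀ s, DecidableEq (A s)]
    (a : ∀ s, A s) (s : S) (h : A s → ℝ) :
    ∑ b, pureStrat a s b * h b = h (a s) := by
  simp [pureStrat, ite_mul]

lemma mulVec_expand (Q : Matrix S S ℝ) (β : ℝ) (w : S → ℝ) (s : S) :
    ((β • (1 : Matrix S S ℝ) - Q) *ᵥ w) s = β * w s - ∑ s', Q s s' * w s' := by
  simp [Matrix.mulVec, dotProduct, Matrix.sub_apply, Matrix.smul_apply, Matrix.one_apply,
    sub_mul, Finset.sum_sub_distrib, ite_mul, mul_ite, Finset.sum_ite_eq]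

/-- Levy–Desplanques invertibility for `β•1 - Q` with `Q` a rate matrix. -/
lemma det_isUnit_of_rate (Q : Matrix S S ℝ)
    (hoff : ∀ s s', s' ≠ s → 0 ≤ Q s s') (hrow : ∀ s, ∑ s', Q s s' = 0)
    (β : ℝ) (hβ : 0 < β) :
    IsUnit (β • (1 : Matrix S S ℝ) - Q).det := by
  refine isUnit_iff_ne_zero.mpr (det_ne_zero_of_sum_row_lt_diag fun k => ?_)
  have hsum : ∑ j ∈ Finset.univ.erase k, ‖(β • (1 : Matrix S S ℝ) - Q) k j‖
      = ∑ j ∈ Finset.univ.erase k, Q k j := by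
    refine Finset.sum_congr rfl fun j hj => ?_
    have hjk : j ≠ k := Finset.ne_of_mem_erase hj
    have : (β • (1 : Matrix S S ℝ) - Q) k j = -Q k j := by
      simp [Matrix.sub_apply, Matrix.smul_apply, Matrix.one_apply, (Ne.symm hjk)]
    rw [this, norm_neg, Real.norm_eq_abs, abs_of_nonneg (hoff k j hjk)]
  have hnn : (0:ℝ) ≤ ∑ j ∈ Finset.univ.erase k, Q k j :=
    Finset.sum_nonneg fun j hj => hoff k j (Finset.ne_of_mem_erase hj)
  have hdiag : Q k k = -∑ j ∈ Finset.univ.erase k, Q k j := by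
    have := hrow k
    rw [← Finset.add_sum_erase _ _ (Finset.mem_univ k)] at this
    linarith
  have hMkk : (β • (1 : Matrix S S ℝ) - Q) k k = β + ∑ j ∈ Finset.univ.erase k, Q k j := by
    rw [Matrix.sub_apply, Matrix.smul_apply, Matrix.one_apply_eq, smul_eq_mul, mul_one, hdiag]
    ring
  rw [hsum, hMkk, Real.norm_eq_abs, abs_of_pos (by linarith)]
  linarith

/-- Minimum principle: if `(β•1 - Q) *ᵥ u ≥ 0` for a rate matrix `Q` and `β > 0` then `u ≥ 0`. -/
lemma nonneg_of_rate [Nonempty S] (Q : Matrix S S ℝ)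
    (hoff : ∀ s s', s' ≠ s → 0 ≤ Q s s') (hrow : ∀ s, ∑ s', Q s s' = 0)
    (β : ℝ) (hβ : 0 < β) (u : S → ℝ)
    (h : ∀ s, 0 ≤ ((β • (1 : Matrix S S ℝ) - Q) *ᵥ u) s) : ∀ s, 0 ≤ u s := by
  obtain ⟨s₀, -, hmin⟩ := Finset.exists_min_image Finset.univ u
    ⟨Classical.arbitrary S, Finset.mem_univ _⟩
  have key : 0 ≤ u s₀ := by
    have h0 := h s₀
    rw [mulVec_expand] at h0
    have hge : ∑ s', Q s₀ s' * u s₀ ≤ ∑ s', Q s₀ s' * u s' := by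
      refine Finset.sum_le_sum fun s' _ => ?_
      rcases eq_or_ne s' s₀ with rfl | hne
      · exact le_rfl
      · exact mul_le_mul_of_nonneg_left (hmin s' (Finset.mem_univ s')) (hoff s₀ s' hne)
    have hzero : ∑ s', Q s₀ s' * u s₀ = 0 := by
      rw [← Finset.sum_mul, hrow, zero_mul]
    by_contra hneg
    push_neg at hneg
    nlinarith
  intro s; exact key.trans (hmin s (Finset.mem_univ s))

end Helper
section OnePlayer

variable {S : Type} [Fintype S] [DecidableEq S] [Nonempty S]
  {B : S → Type} [∀ s, Fintype (B s)] [∀ s, DecidableEq (B s)]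

/-- One-player rate matrix. -/
def QOf (ν : ∀ s, B s → S → ℝ) (f : ∀ s, B s → ℝ) : Matrix S S ℝ :=
  Matrix.of fun s s' => ∑ b, f s b * ν s b s'

/-- One-player reward vector. -/
def rOf (ρ : ∀ s, B s → ℝ) (f : ∀ s, B s → ℝ) : S → ℝ :=
  fun s => ∑ b, f s b * ρ s b

/-- One-player discounted value. -/
def valOf (α : ℝ) (ν : ∀ s, B s → S → ℝ) (ρ : ∀ s, B s → ℝ) (f : ∀ s, B s → ℝ) : S → ℝ :=
  (α • (1 : Matrix S S ℝ) - QOf ν f)⁻¹.mulVec (rOf ρ f)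

lemma QOf_offdiag {ν : ∀ s, B s → S → ℝ} (hν0 : ∀ s b s', s' ≠ s → 0 ≤ ν s b s')
    {f : ∀ s, B s → ℝ} (hf : IsStrategy f) :
    ∀ s s', s' ≠ s → 0 ≤ QOf ν f s s' := by
  intro s s' hne
  exact Finset.sum_nonneg fun b _ => mul_nonneg (hf.1 s b) (hν0 s b s' hne)

lemma QOf_row {ν : ∀ s, B s → S → ℝ} (hνrow : ∀ s b, ∑ s', ν s b s' = 0)
    (f : ∀ s, B s → ℝ) : ∀ s, ∑ s', QOf ν f s s' = 0 := by
  intro s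
  simp only [QOf, Matrix.of_apply]
  rw [Finset.sum_comm]
  calc ∑ b, ∑ s', f s b * ν s b s' = ∑ b : B s, f s b * ∑ s', ν s b s' := by
        simp [Finset.mul_sum]
    _ = 0 := by simp [hνrow]

lemma valOf_spec {ν : ∀ s, B s → S → ℝ} (hν0 : ∀ s b s', s' ≠ s → 0 ≤ ν s b s')
    (hνrow : ∀ s b, ∑ s', ν s b s' = 0) (ρ : ∀ s, B s → ℝ)
    {f : ∀ s, B s → ℝ} (hf : IsStrategy f) (β : ℝ) (hβ : 0 < β) :
    (β • (1 : Matrix S S ℝ) - QOf ν f) *ᵥ valOf β ν ρ f = rOf ρ f := by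
  have hdet := det_isUnit_of_rate (QOf ν f) (QOf_offdiag hν0 hf) (QOf_row hνrow f) β hβ
  rw [valOf, Matrix.mulVec_mulVec, Matrix.mul_nonsing_inv _ hdet, Matrix.one_mulVec]

lemma QOf_pure {ν : ∀ s, B s → S → ℝ} (bsel : ∀ s, B s)
    (hpure : ∀ s s', ν s (bsel s) s' = 0) :
    QOf ν (pureStrat bsel) = 0 := by
  ext s s'
  simp only [QOf, Matrix.of_apply, Matrix.zero_apply]
  rw [sum_pureStrat bsel s (fun b => ν s b s')]
  exact hpure s s'

lemma valOf_pure {ν : ∀ s, B s → S → ℝ} (bsel : ∀ s, B s)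
    (hpure : ∀ s s', ν s (bsel s) s' = 0) (ρ : ∀ s, B s → ℝ) (β : ℝ) (hβ : 0 < β) :
    ∀ s, valOf β ν ρ (pureStrat bsel) s = ρ s (bsel s) / β := by
  intro s
  have hβ' : β ≠ 0 := ne_of_gt hβ
  have hinv : (β • (1 : Matrix S S ℝ) - QOf ν (pureStrat bsel))⁻¹ = β⁻¹ • (1 : Matrix S S ℝ) := by
    rw [QOf_pure bsel hpure, sub_zero]
    refine Matrix.inv_eq_right_inv ?_
    rw [Matrix.smul_mul, Matrix.mul_smul, one_mul, smul_smul, mul_inv_cancel₀ hβ', one_smul]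
  rw [valOf, hinv]
  rw [Matrix.smul_mulVec, Matrix.one_mulVec]
  have : rOf ρ (pureStrat bsel) s = ρ s (bsel s) := sum_pureStrat bsel s (ρ s)
  simp [this, inv_mul_eq_div]

/-- The core one-player lemma: N1+N2+N3 imply optimality of the pure strategy for all
discount rates `α ∈ (0, αhat]`. -/
lemma one_player_main (ν : ∀ s, B s → S → ℝ) (ρ : ∀ s, B s → ℝ) (bsel : ∀ s, B s)
    (hν0 : ∀ s b s', s' ≠ s → 0 ≤ ν s b s')
    (hνrow : ∀ s b, ∑ s', ν s b s' = 0)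
    (hpure : ∀ s s', ν s (bsel s) s' = 0)
    (c : ℝ) (hc : 0 < c)
    (αhat : ℝ) (hαhat : 0 < αhat)
    (hN1 : ∀ f', IsStrategy f' →
      ∀ s, valOf αhat ν ρ f' s ≤ valOf αhat ν ρ (pureStrat bsel) s)
    (hN3 : ∀ s (b : B s),
      ∑ s', (ν s b s' / c + if s = s' then 1 else 0) * ρ s' (bsel s') ≤ ρ s b) :
    ∀ α, 0 < α → α ≤ αhat → ∀ f, IsStrategy f →
      ∀ s, valOf α ν ρ f s ≤ ρ s (bsel s) / α := by
  set w : S → ℝ := fun s => ρ s (bsel s) with hw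
  -- Step B: Bellman inequality at αhat
  have hBellhat : ∀ s₀ (b : B s₀), ρ s₀ b + (∑ s', ν s₀ b s' * w s') / αhat ≤ w s₀ := by
    intro s₀ b
    set fb : ∀ s, B s → ℝ := pureStrat (Function.update bsel s₀ b) with hfb
    have hfbs : IsStrategy fb := isStrategy_pureStrat _
    set v : S → ℝ := valOf αhat ν ρ fb with hv
    have hspec := valOf_spec hν0 hνrow ρ hfbs αhat hαhat
    have hQ : ∀ s s', QOf ν fb s s' = ν s (Function.update bsel s₀ b s) s' := by
      intro s s'
      exact sum_pureStrat (Function.update bsel s₀ b) s (fun b' => ν s b' s')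
    have hr : ∀ s, rOf ρ fb s = ρ s (Function.update bsel s₀ b s) := by
      intro s; exact sum_pureStrat (Function.update bsel s₀ b) s (ρ s)
    -- off states: value equals w s / αhat
    have hvoff : ∀ s, s ≠ s₀ → v s = w s / αhat := by
      intro s hs
      have h1 := congrFun hspec s
      rw [mulVec_expand] at h1
      have h2 : ∀ s', QOf ν fb s s' = 0 := by
        intro s'; rw [hQ, Function.update_of_ne hs]; exact hpure s s'
      have h3 : rOf ρ fb s = w s := by rw [hr, Function.update_of_ne hs]
      rw [h3] at h1
      simp only [h2, zero_mul, Finset.sum_const_zero, sub_zero] at h1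
      rw [eq_div_iff (ne_of_gt hαhat), mul_comm]
      linarith
    -- the s₀ equation
    have heq : αhat * v s₀ - ∑ s', ν s₀ b s' * v s' = ρ s₀ b := by
      have h1 := congrFun hspec s₀
      rw [mulVec_expand] at h1
      have h3 : rOf ρ fb s₀ = ρ s₀ b := by rw [hr, Function.update_self]
      rw [h3] at h1
      rw [← h1]
      congr 1
      refine Finset.sum_congr rfl fun s' _ => ?_
      rw [hQ, Function.update_self]
    -- N1 bound at s₀
    have hv0 : v s₀ ≤ w s₀ / αhat := by
      have := hN1 fb hfbs s₀
      rwa [valOf_pure bsel hpure ρ αhat hαhat s₀] at this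
    -- split the sums at s₀
    have hsplitv : ∑ s', ν s₀ b s' * v s'
        = ν s₀ b s₀ * v s₀ + ∑ s' ∈ Finset.univ.erase s₀, ν s₀ b s' * (w s' / αhat) := by
      rw [← Finset.add_sum_erase _ _ (Finset.mem_univ s₀)]
      congr 1
      refine Finset.sum_congr rfl fun s' hs' => ?_
      rw [hvoff s' (Finset.ne_of_mem_erase hs')]
    have hsplitw : ∑ s', ν s₀ b s' * w s'
        = ν s₀ b s₀ * w s₀ + ∑ s' ∈ Finset.univ.erase s₀, ν s₀ b s' * w s' :=
      (Finset.add_sum_erase _ _ (Finset.mem_univ s₀)).symm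
    set E : ℝ := ∑ s' ∈ Finset.univ.erase s₀, ν s₀ b s' * w s' with hE
    have hsum_div : ∑ s' ∈ Finset.univ.erase s₀, ν s₀ b s' * (w s' / αhat) = E / αhat := by
      rw [hE, Finset.sum_div]
      exact Finset.sum_congr rfl fun s' _ => by ring
    have hd : ν s₀ b s₀ ≤ 0 := by
      have h0 := hνrow s₀ b
      rw [← Finset.add_sum_erase _ _ (Finset.mem_univ s₀)] at h0
      have : (0:ℝ) ≤ ∑ s' ∈ Finset.univ.erase s₀, ν s₀ b s' :=
        Finset.sum_nonneg fun s' hs' => hν0 s₀ b s' (Finset.ne_of_mem_erase hs')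
      linarith
    rw [hsplitv, hsum_div] at heq
    rw [hsplitw]
    -- algebra
    have hkey : (αhat - ν s₀ b s₀) * v s₀ ≤ (αhat - ν s₀ b s₀) * (w s₀ / αhat) :=
      mul_le_mul_of_nonneg_left hv0 (by linarith)
    have hc1 : αhat * (w s₀ / αhat) = w s₀ := by field_simp
    have hc2 : (ν s₀ b s₀ * w s₀ + E) / αhat
        = ν s₀ b s₀ * (w s₀ / αhat) + E / αhat := by ring
    rw [hc2]
    nlinarith [hkey, hc1]
  -- Step C/D: Bellman inequality for all 0 < α ≤ αhat
  have hBell : ∀ α, 0 < α → α ≤ αhat → ∀ s₀ (b : B s₀),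
      ρ s₀ b + (∑ s', ν s₀ b s' * w s') / α ≤ w s₀ := by
    intro α hα hαle s₀ b
    set m : ℝ := ∑ s', ν s₀ b s' * w s' with hm
    have h3 : w s₀ + m / c ≤ ρ s₀ b := by
      have := hN3 s₀ b
      have hrw : ∑ s', (ν s₀ b s' / c + if s₀ = s' then 1 else 0) * ρ s' (bsel s')
          = m / c + w s₀ := by
        rw [hm, Finset.sum_div]
        have hterm : ∀ s', (ν s₀ b s' / c + if s₀ = s' then 1 else 0) * ρ s' (bsel s')
            = ν s₀ b s' * w s' / c + (if s₀ = s' then 1 else 0) * w s' := by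
          intro s'
          simp only [hw]
          ring
        rw [Finset.sum_congr rfl fun s' _ => hterm s', Finset.sum_add_distrib]
        congr 1
        simp [ite_mul]
      rw [hrw] at this
      linarith
    have hB := hBellhat s₀ b
    have hm0 : m ≤ 0 := by
      by_contra hpos
      push_neg at hpos
      have h4 : 0 < m / c := div_pos hpos hc
      have h5 : 0 < m / αhat := div_pos hpos hαhat
      linarith
    have : m / α ≤ m / αhat := by
      rw [div_le_div_iff₀ hα hαhat]
      nlinarith
    linarith
  -- Step E: verification
  intro α hα hαle f hf s
  set Q : Matrix S S ℝ := QOf ν f with hQ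
  have hoffQ := QOf_offdiag hν0 hf
  have hrowQ := QOf_row hνrow f
  have hspec := valOf_spec hν0 hνrow ρ hf α hα
  set v : S → ℝ := valOf α ν ρ f with hv
  set u : S → ℝ := fun s => w s / α - v s with hu
  have hMu : ∀ s, 0 ≤ ((α • (1 : Matrix S S ℝ) - Q) *ᵥ u) s := by
    intro s
    have hdecomp : ((α • (1 : Matrix S S ℝ) - Q) *ᵥ u) s
        = ((α • (1 : Matrix S S ℝ) - Q) *ᵥ (fun s => w s / α)) s - rOf ρ f s := by
      rw [← hspec, mulVec_expand, mulVec_expand, mulVec_expand]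
      have h1 : ∑ s', Q s s' * u s' = (∑ s', Q s s' * (w s' / α)) - ∑ s', Q s s' * v s' := by
        rw [← Finset.sum_sub_distrib]
        refine Finset.sum_congr rfl fun s' _ => ?_
        simp only [hu]
        ring
      rw [h1]
      simp only [hu]
      ring
    rw [hdecomp, mulVec_expand]
    have hαw : α * (w s / α) = w s := by field_simp
    have hswap : ∑ s', Q s s' * (w s' / α)
        = ∑ b, f s b * ((∑ s', ν s b s' * w s') / α) := by
      simp only [hQ, QOf, Matrix.of_apply]
      calc ∑ s', (∑ b, f s b * ν s b s') * (w s' / α)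
          = ∑ s', ∑ b, f s b * (ν s b s' * w s' / α) := by
            refine Finset.sum_congr rfl fun s' _ => ?_
            rw [Finset.sum_mul]
            exact Finset.sum_congr rfl fun b _ => by ring
        _ = ∑ b, ∑ s', f s b * (ν s b s' * w s' / α) := Finset.sum_comm
        _ = ∑ b, f s b * ((∑ s', ν s b s' * w s') / α) := by
            refine Finset.sum_congr rfl fun b _ => ?_
            rw [← Finset.mul_sum, Finset.sum_div]
    rw [hαw, hswap]
    simp only [rOf]
    have hterm : ∀ b : B s, f s b * ρ s b + f s b * ((∑ s', ν s b s' * w s') / α)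
        ≤ f s b * w s := by
      intro b
      have hb := hBell α hα hαle s b
      have h2 := mul_le_mul_of_nonneg_left hb (hf.1 s b)
      calc f s b * ρ s b + f s b * ((∑ s', ν s b s' * w s') / α)
          = f s b * (ρ s b + (∑ s', ν s b s' * w s') / α) := by ring
        _ ≤ f s b * w s := h2
    have h1 : ∑ b, (f s b * ρ s b + f s b * ((∑ s', ν s b s' * w s') / α))
        ≤ ∑ b, f s b * w s := Finset.sum_le_sum fun b _ => hterm b
    rw [Finset.sum_add_distrib, ← Finset.sum_mul, hf.2 s, one_mul] at h1
    linarith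
  have := nonneg_of_rate Q hoffQ hrowQ α hα u hMu s
  rw [hu] at this
  simp only at this
  linarith

end OnePlayer

section Glue

variable {S : Type} [Fintype S] [DecidableEq S]
  {A1 A2 : S → Type}
  [∀ s, Fintype (A1 s)] [∀ s, DecidableEq (A1 s)]
  [∀ s, Fintype (A2 s)] [∀ s, DecidableEq (A2 s)]

lemma sum2_right (h : ∀ s, A1 s → A2 s → ℝ) (f : ∀ s, A1 s → ℝ) (asel2 : ∀ s, A2 s) (s : S) :
    ∑ a1, ∑ a2, f s a1 * pureStrat asel2 s a2 * h s a1 a2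
      = ∑ a1, f s a1 * h s a1 (asel2 s) := by
  refine Finset.sum_congr rfl fun a1 _ => ?_
  calc ∑ a2, f s a1 * pureStrat asel2 s a2 * h s a1 a2
      = ∑ a2, pureStrat asel2 s a2 * (f s a1 * h s a1 a2) :=
        Finset.sum_congr rfl fun a2 _ => by ring
    _ = f s a1 * h s a1 (asel2 s) := sum_pureStrat asel2 s _

lemma sum2_left (h : ∀ s, A1 s → A2 s → ℝ) (asel1 : ∀ s, A1 s) (g : ∀ s, A2 s → ℝ) (s : S) :
    ∑ a1, ∑ a2, pureStrat asel1 s a1 * g s a2 * h s a1 a2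
      = ∑ a2, g s a2 * h s (asel1 s) a2 := by
  calc ∑ a1, ∑ a2, pureStrat asel1 s a1 * g s a2 * h s a1 a2
      = ∑ a1, pureStrat asel1 s a1 * ∑ a2, g s a2 * h s a1 a2 := by
        refine Finset.sum_congr rfl fun a1 _ => ?_
        rw [Finset.mul_sum]
        exact Finset.sum_congr rfl fun a2 _ => by ring
    _ = ∑ a2, g s a2 * h s (asel1 s) a2 := sum_pureStrat asel1 s _

lemma ctVal_right_pure (α : ℝ) (μ : ∀ s, A1 s → A2 s → S → ℝ) (r : ∀ s, A1 s → A2 s → ℝ)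
    (f : ∀ s, A1 s → ℝ) (asel2 : ∀ s, A2 s) :
    ctVal α μ r f (pureStrat asel2)
      = valOf α (fun s b => μ s b (asel2 s)) (fun s b => r s b (asel2 s)) f := by
  unfold ctVal valOf
  have hM : rateMat μ f (pureStrat asel2) = QOf (fun s b => μ s b (asel2 s)) f := by
    ext s s'
    exact sum2_right (fun s a1 a2 => μ s a1 a2 s') f asel2 s
  have hr : rewVec r f (pureStrat asel2) = rOf (fun s b => r s b (asel2 s)) f := by
    funext s
    exact sum2_right r f asel2 s
  rw [hM, hr]

lemma ctVal_left_pure (α : ℝ) (μ : ∀ s, A1 s → A2 s → S → ℝ) (r : ∀ s, A1 s → A2 s → ℝ)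
    (asel1 : ∀ s, A1 s) (g : ∀ s, A2 s → ℝ) :
    ctVal α μ r (pureStrat asel1) g
      = valOf α (fun s b => μ s (asel1 s) b) (fun s b => r s (asel1 s) b) g := by
  unfold ctVal valOf
  have hM : rateMat μ (pureStrat asel1) g = QOf (fun s b => μ s (asel1 s) b) g := by
    ext s s'
    exact sum2_left (fun s a1 a2 => μ s a1 a2 s') asel1 g s
  have hr : rewVec r (pureStrat asel1) g = rOf (fun s b => r s (asel1 s) b) g := by
    funext s
    exact sum2_left r asel1 g s
  rw [hM, hr]

end Glue


/-- Conditions N1–N3 are sufficient for a pure stationary Nash equilibrium of a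
finite continuous-time discounted stochastic game to be a Blackwell–Nash
equilibrium. Here `μnorm` is the (strictly positive) maximum of the total
transition rates `∑_{s' ≠ s} μ(s',s,a¹,a²)`. -/
theorem ct_blackwell_nash_of_N1_N2_N3
    {S : Type} [Fintype S] [DecidableEq S] [Nonempty S]
    {A1 A2 : S → Type}
    [∀ s, Fintype (A1 s)] [∀ s, DecidableEq (A1 s)] [∀ s, Nonempty (A1 s)]
    [∀ s, Fintype (A2 s)] [∀ s, DecidableEq (A2 s)] [∀ s, Nonempty (A2 s)]
    (μ : ∀ s, A1 s → A2 s → S → ℝ) (r1 r2 : ∀ s, A1 s → A2 s → ℝ)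
    (hμ0 : ∀ s a1 a2 s', s' ≠ s → 0 ≤ μ s a1 a2 s')
    (hμdiag : ∀ s a1 a2, μ s a1 a2 s = -∑ s' ∈ Finset.univ.erase s, μ s a1 a2 s')
    (μnorm : ℝ) (hμnorm_pos : 0 < μnorm)
    (hμnorm_ub : ∀ s a1 a2, ∑ s' ∈ Finset.univ.erase s, μ s a1 a2 s' ≤ μnorm)
    (hμnorm_mem : ∃ s, ∃ a1 : A1 s, ∃ a2 : A2 s,
      ∑ s' ∈ Finset.univ.erase s, μ s a1 a2 s' = μnorm)
    (asel1 : ∀ s, A1 s) (asel2 : ∀ s, A2 s)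
    (αhat : ℝ) (hαhat : 0 < αhat)
    (hN1 : IsNashEqCT αhat μ r1 r2 (pureStrat asel1) (pureStrat asel2))
    (hN2 : ∀ s s', rateMat μ (pureStrat asel1) (pureStrat asel2) s s' = 0)
    (hN3a : ∀ s (b : A1 s),
      ∑ s', (μ s b (asel2 s) s' / μnorm + if s = s' then 1 else 0)
          * r1 s' (asel1 s') (asel2 s')
        ≤ r1 s b (asel2 s))
    (hN3b : ∀ s (b : A2 s),
      ∑ s', (μ s (asel1 s) b s' / μnorm + if s = s' then 1 else 0)
          * r2 s' (asel1 s') (asel2 s')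
        ≤ r2 s (asel1 s) b) :
    ∃ α₀ : ℝ, 0 < α₀ ∧ ∀ α ∈ Ioc 0 α₀,
      IsNashEqCT α μ r1 r2 (pureStrat asel1) (pureStrat asel2) := by
    -- Shorthand: the pure strategies and reduced one-player data
  have hpp : ∀ s s', rateMat μ (pureStrat asel1) (pureStrat asel2) s s'
      = μ s (asel1 s) (asel2 s) s' := by
    intro s s'
    have h1 : rateMat μ (pureStrat asel1) (pureStrat asel2) s s'
        = ∑ a1, pureStrat asel1 s a1 * μ s a1 (asel2 s) s' :=
      sum2_right (fun s a1 a2 => μ s a1 a2 s') (pureStrat asel1) asel2 s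
    rw [h1, sum_pureStrat]
  have hzero : ∀ s s', μ s (asel1 s) (asel2 s) s' = 0 := by
    intro s s'
    rw [← hpp s s']
    exact hN2 s s'
  -- player 1 data
  have hν1off : ∀ s (b : A1 s) s', s' ≠ s → 0 ≤ μ s b (asel2 s) s' :=
    fun s b s' h => hμ0 s b (asel2 s) s' h
  have hν1row : ∀ s (b : A1 s), ∑ s', μ s b (asel2 s) s' = 0 := by
    intro s b
    rw [← Finset.add_sum_erase _ _ (Finset.mem_univ s), hμdiag s b (asel2 s)]
    ring
  have hpure1 : ∀ s s', (fun s (b : A1 s) => μ s b (asel2 s)) s (asel1 s) s' = 0 :=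
    fun s s' => hzero s s'
  -- player 2 data
  have hν2off : ∀ s (b : A2 s) s', s' ≠ s → 0 ≤ μ s (asel1 s) b s' :=
    fun s b s' h => hμ0 s (asel1 s) b s' h
  have hν2row : ∀ s (b : A2 s), ∑ s', μ s (asel1 s) b s' = 0 := by
    intro s b
    rw [← Finset.add_sum_erase _ _ (Finset.mem_univ s), hμdiag s (asel1 s) b]
    ring
  have hpure2 : ∀ s s', (fun s (b : A2 s) => μ s (asel1 s) b) s (asel2 s) s' = 0 :=
    fun s s' => hzero s s'
  -- translate N1
  have hN1a : ∀ f', IsStrategy f' → ∀ s,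
      valOf αhat (fun s b => μ s b (asel2 s)) (fun s b => r1 s b (asel2 s)) f' s
        ≤ valOf αhat (fun s b => μ s b (asel2 s)) (fun s b => r1 s b (asel2 s))
            (pureStrat asel1) s := by
    intro f' hf' s
    rw [← ctVal_right_pure, ← ctVal_right_pure]
    exact hN1.2.2.1 f' hf' s
  have hN1b : ∀ g', IsStrategy g' → ∀ s,
      valOf αhat (fun s b => μ s (asel1 s) b) (fun s b => r2 s (asel1 s) b) g' s
        ≤ valOf αhat (fun s b => μ s (asel1 s) b) (fun s b => r2 s (asel1 s) b)
            (pureStrat asel2) s := by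
    intro g' hg' s
    rw [← ctVal_left_pure, ← ctVal_left_pure]
    exact hN1.2.2.2 g' hg' s
  -- the one-player conclusions
  have key1 := one_player_main (fun s b => μ s b (asel2 s)) (fun s b => r1 s b (asel2 s))
    asel1 hν1off hν1row hpure1 μnorm hμnorm_pos αhat hαhat hN1a hN3a
  have key2 := one_player_main (fun s b => μ s (asel1 s) b) (fun s b => r2 s (asel1 s) b)
    asel2 hν2off hν2row hpure2 μnorm hμnorm_pos αhat hαhat hN1b hN3b
  refine ⟨αhat, hαhat, fun α hα => ?_⟩
  obtain ⟨hα0, hαle⟩ := hα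
  refine ⟨isStrategy_pureStrat asel1, isStrategy_pureStrat asel2, ?_, ?_⟩
  · intro f' hf' s
    rw [ctVal_right_pure, ctVal_right_pure,
      valOf_pure asel1 hpure1 (fun s b => r1 s b (asel2 s)) α hα0 s]
    exact key1 α hα0 hαle f' hf' s
  · intro g' hg' s
    rw [ctVal_left_pure, ctVal_left_pure,
      valOf_pure asel2 hpure2 (fun s b => r2 s (asel1 s) b) α hα0 s]
    exact key2 α hα0 hαle g' hg' s

end
end
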